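/- arXiv:2309.11606 — 7 statements merged into one kernel-verified Lean document; each statement's English description precedes it below -/
import Mathlib

section
/- Every connected graph with an even number of edges admits a partition of its edge set into pairs of adjacent edges (i.e., pairs sharing a common vertex). -/
/-!
Assign every edge to one of its endpoints. If each vertex receives an even number of edges,
pairing up the edges received at each vertex gives the partition. Reassigning an edge `uw` to
its other endpoint changes the parity of the number of edges received exactly at `u` and `w`;
doing this along a walk from `u` to `w` therefore changes it exactly at `u` and `w`. The
vertices receiving an odd number of edges are even in number, since the numbers received add
up to the even number of edges, so in a connected graph they can be removed two at a time.
-/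

open Finset SimpleGraph

section

variable {V : Type*} [DecidableEq V]

def IsAdjPairPartition (P : Finset (Finset (Sym2 V))) (E : Finset (Sym2 V)) : Prop :=
  (∀ p ∈ P, #p = 2 ∧ p ⊆ E ∧ ∃ v : V, ∀ e ∈ p, v ∈ e) ∧
    (∀ p ∈ P, ∀ q ∈ P, p ≠ q → Disjoint p q) ∧ P.biUnion id = E

namespace IsAdjPairPartition

theorem empty : IsAdjPairPartition (∅ : Finset (Finset (Sym2 V))) ∅ := by
  simp [IsAdjPairPartition]

theorem singleton {t : Finset (Sym2 V)} {v : V} (ht : #t = 2) (hv : ∀ e ∈ t, v ∈ e) :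
    IsAdjPairPartition {t} t := by
  simpa [IsAdjPairPartition] using ⟨ht, v, hv⟩

theorem union {P Q : Finset (Finset (Sym2 V))} {E F : Finset (Sym2 V)}
    (hP : IsAdjPairPartition P E) (hQ : IsAdjPairPartition Q F) (hEF : Disjoint E F) :
    IsAdjPairPartition (P ∪ Q) (E ∪ F) := by
  obtain ⟨hP₁, hP₂, hP₃⟩ := hP
  obtain ⟨hQ₁, hQ₂, hQ₃⟩ := hQ
  refine ⟨?_, ?_, by rw [union_biUnion, hP₃, hQ₃]⟩
  · intro p hp
    rcases mem_union.1 hp with hp | hp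
    · obtain ⟨h2, hsub, hv⟩ := hP₁ p hp
      exact ⟨h2, hsub.trans subset_union_left, hv⟩
    · obtain ⟨h2, hsub, hv⟩ := hQ₁ p hp
      exact ⟨h2, hsub.trans subset_union_right, hv⟩
  · intro p hp q hq hpq
    rcases mem_union.1 hp with hp | hp <;> rcases mem_union.1 hq with hq | hq
    · exact hP₂ p hp q hq hpq
    · exact hEF.mono (hP₁ p hp).2.1 (hQ₁ q hq).2.1
    · exact hEF.symm.mono (hQ₁ p hp).2.1 (hP₁ q hq).2.1
    · exact hQ₂ p hp q hq hpq

end IsAdjPairPartition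

theorem exists_isAdjPairPartition_of_forall_mem {v : V} {D : Finset (Sym2 V)}
    (hv : ∀ e ∈ D, v ∈ e) (hD : Even #D) : ∃ P, IsAdjPairPartition P D := by
  induction D using Finset.strongInduction with
  | H D ih =>
    rcases D.eq_empty_or_nonempty with rfl | hne
    · exact ⟨∅, .empty⟩
    have h2 : 2 ≤ #D := by
      obtain ⟨k, hk⟩ := hD
      have := hne.card_pos
      omega
    obtain ⟨t, htD, ht⟩ := exists_subset_card_eq h2
    have hrest : Even #(D \ t) := by
      rw [card_sdiff_of_subset htD, ht]
      exact hD.tsub even_two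
    obtain ⟨P, hP⟩ := ih (D \ t) (sdiff_ssubset htD (card_pos.1 (by omega)))
      (fun e he => hv e (mem_sdiff.1 he).1) hrest
    refine ⟨{t} ∪ P, ?_⟩
    rw [← union_sdiff_of_subset htD]
    exact (IsAdjPairPartition.singleton ht fun e he => hv e (htD he)).union hP disjoint_sdiff

theorem exists_isAdjPairPartition_of_even_fibers {E : Finset (Sym2 V)} {h : Sym2 V → V}
    (hh : ∀ e ∈ E, h e ∈ e) (heven : ∀ v, Even #{e ∈ E | h e = v}) :
    ∃ P, IsAdjPairPartition P E := by
  suffices ∀ s : Finset V, ∃ P, IsAdjPairPartition P {e ∈ E | h e ∈ s} by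
    have := this (E.image h)
    rwa [filter_true_of_mem fun e he => mem_image_of_mem h he] at this
  intro s
  induction s using Finset.induction_on with
  | empty => exact ⟨∅, by simpa using .empty⟩
  | insert v s hvs ih =>
    obtain ⟨P, hP⟩ := ih
    obtain ⟨Q, hQ⟩ := exists_isAdjPairPartition_of_forall_mem
      (fun e he => (mem_filter.1 he).2 ▸ hh e (mem_filter.1 he).1) (heven v)
    refine ⟨Q ∪ P, ?_⟩
    simp only [mem_insert, filter_or]
    exact hQ.union hP (disjoint_filter.2 fun e _ hev hes => hvs (hev ▸ hes))

def fiberParity (E : Finset (Sym2 V)) (h : Sym2 V → V) : V → ZMod 2 :=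
  ∑ e ∈ E, Pi.single (h e) 1

theorem fiberParity_apply (E : Finset (Sym2 V)) (h : Sym2 V → V) (v : V) :
    fiberParity E h v = #{e ∈ E | h e = v} := by
  rw [fiberParity, Finset.sum_apply, natCast_card_filter]
  simp only [Pi.single_apply, eq_comm]

theorem fiberParity_update {E : Finset (Sym2 V)} {h : Sym2 V → V} {s : Sym2 V} (hs : s ∈ E)
    (c : V) :
    fiberParity E (Function.update h s c) =
      fiberParity E h + Pi.single (h s) 1 + Pi.single c 1 := by
  unfold fiberParity
  rw [← add_sum_erase _ _ hs, ← add_sum_erase _ _ hs,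
    sum_congr rfl fun e he => by rw [Function.update_of_ne (ne_of_mem_erase he)],
    Function.update_self]
  funext v
  simp only [Pi.add_apply]
  linear_combination -CharTwo.add_self_eq_zero ((Pi.single (h s) 1 : V → ZMod 2) v)

theorem exists_reassign_along_walk {G : SimpleGraph V} {E : Finset (Sym2 V)} {u w : V}
    (p : G.Walk u w) (hpE : ∀ e ∈ p.edges, e ∈ E) {h : Sym2 V → V}
    (hh : ∀ e ∈ E, h e ∈ e) :
    ∃ h' : Sym2 V → V, (∀ e ∈ E, h' e ∈ e) ∧
      fiberParity E h' = fiberParity E h + Pi.single u 1 + Pi.single w 1 := by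
  induction p generalizing h with
  | nil =>
    refine ⟨h, hh, funext fun v => ?_⟩
    rw [Pi.add_apply, Pi.add_apply, add_assoc, CharTwo.add_self_eq_zero, add_zero]
  | @cons u x w _ p ih =>
    obtain ⟨h₁, hh₁, hpar₁⟩ := ih (fun e he => hpE e (by simp [he])) hh
    have hE : s(u, x) ∈ E := hpE _ (by simp)
    have hother : ∃ c ∈ s(u, x),
        (Pi.single (h₁ s(u, x)) 1 + Pi.single c 1 : V → ZMod 2) =
          Pi.single u 1 + Pi.single x 1 := by
      rcases Sym2.mem_iff.1 (hh₁ _ hE) with hu | hx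
      · exact ⟨x, Sym2.mem_mk_right u x, by rw [hu]⟩
      · exact ⟨u, Sym2.mem_mk_left u x, by rw [hx, add_comm]⟩
    obtain ⟨c, hc, hpar⟩ := hother
    refine ⟨Function.update h₁ s(u, x) c, fun e he => ?_, ?_⟩
    · rcases eq_or_ne e s(u, x) with rfl | hne
      · rwa [Function.update_self]
      · rw [Function.update_of_ne hne]
        exact hh₁ e he
    · rw [fiberParity_update hE, add_assoc, hpar, hpar₁]
      funext v
      simp only [Pi.add_apply]
      linear_combination CharTwo.add_self_eq_zero ((Pi.single x 1 : V → ZMod 2) v)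

section Fintype

variable [Fintype V]

def oddFibers (E : Finset (Sym2 V)) (h : Sym2 V → V) : Finset V :=
  {v | fiberParity E h v ≠ 0}

theorem even_card_oddFibers {E : Finset (Sym2 V)} (hE : Even #E) (h : Sym2 V → V) :
    Even #(oddFibers E h) := by
  have hparity : ∀ a : ZMod 2, (if a ≠ 0 then 1 else 0) = a := by decide
  rw [oddFibers, ← ZMod.natCast_eq_zero_iff_even, natCast_card_filter,
    sum_congr rfl fun v _ => hparity _]
  simp only [fiberParity_apply]
  rw [← Nat.cast_sum, ← card_eq_sum_card_fiberwise (fun e _ => mem_coe.2 (mem_univ (h e))),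
    ZMod.natCast_eq_zero_iff_even]
  exact hE

variable {G : SimpleGraph V} [DecidableRel G.Adj]

theorem exists_oddFibers_ssubset (hconn : G.Preconnected) (heven : Even #G.edgeFinset)
    {h : Sym2 V → V} (hh : ∀ e ∈ G.edgeFinset, h e ∈ e) {v : V}
    (hv : v ∈ oddFibers G.edgeFinset h) :
    ∃ h' : Sym2 V → V, (∀ e ∈ G.edgeFinset, h' e ∈ e) ∧
      oddFibers G.edgeFinset h' ⊂ oddFibers G.edgeFinset h := by
  have hcard : 1 < #(oddFibers G.edgeFinset h) := by
    obtain ⟨k, hk⟩ := even_card_oddFibers heven h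
    have := card_pos.2 ⟨v, hv⟩
    omega
  obtain ⟨w, hw, hwv⟩ := exists_mem_ne hcard v
  obtain ⟨h', hh', hpar⟩ := exists_reassign_along_walk (hconn v w).some
    (fun e he => mem_edgeFinset.2 (Walk.edges_subset_edgeSet _ he)) hh
  refine ⟨h', hh', lt_of_le_of_lt (fun y hy => ?_) (erase_ssubset hv)⟩
  have hodd : ∀ a : ZMod 2, a ≠ 0 → a + 1 = 0 := by decide
  simp only [oddFibers, mem_filter, mem_univ, true_and, mem_erase] at hy hv hw ⊢
  rw [hpar, Pi.add_apply, Pi.add_apply] at hy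
  rcases eq_or_ne y v with rfl | hyv
  · simp [hwv.symm, hodd _ hv] at hy
  rcases eq_or_ne y w with rfl | hyw
  · simp [hyv, hodd _ hw] at hy
  simpa [hyv, hyw] using hy

theorem exists_even_fibers (hconn : G.Connected) (heven : Even #G.edgeFinset) :
    ∃ h : Sym2 V → V, (∀ e ∈ G.edgeFinset, h e ∈ e) ∧
      ∀ v, Even #{e ∈ G.edgeFinset | h e = v} := by
  obtain ⟨h, hh, hmin⟩ :=
    Set.exists_min_image {h : Sym2 V → V | ∀ e ∈ G.edgeFinset, h e ∈ e}
      (fun h => #(oddFibers G.edgeFinset h)) (Set.toFinite _)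
      ⟨fun e => e.out.1, fun e _ => e.out_fst_mem⟩
  refine ⟨h, hh, fun v => ?_⟩
  rw [← ZMod.natCast_eq_zero_iff_even, ← fiberParity_apply]
  by_contra hv
  obtain ⟨h', hh', hlt⟩ := exists_oddFibers_ssubset hconn.preconnected heven hh
    (v := v) (by simpa [oddFibers] using hv)
  exact (card_lt_card hlt).not_ge (hmin h' hh')

end Fintype

end

/-- Kotzig: every connected graph with an even number of edges admits a partition of
its edge set into pairs of adjacent edges (pairs sharing a common vertex). -/
theorem stmt0 {V : Type*} [Fintype V] [DecidableEq V] (G : SimpleGraph V)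
    [DecidableRel G.Adj] (hconn : G.Connected) (heven : Even G.edgeFinset.card) :
    ∃ P : Finset (Finset (Sym2 V)),
      (∀ p ∈ P, p.card = 2 ∧ p ⊆ G.edgeFinset ∧ ∃ v : V, ∀ e ∈ p, v ∈ e) ∧
      (∀ p ∈ P, ∀ q ∈ P, p ≠ q → Disjoint p q) ∧
      P.biUnion id = G.edgeFinset := by
  obtain ⟨h, hh, hfibers⟩ := exists_even_fibers hconn heven
  exact exists_isAdjPairPartition_of_even_fibers hh hfibers
end

section
/- If G is a connected cubic (3-regular) graph on n vertices and J is a set of vertices whose removal leaves an acyclic graph, then |J| ≥ ⌈(n+2)/4⌉. -/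
/-!
The complement `F` of `J` induces a forest, so it spans at most `|F| - 1` edges. Summing degrees
over `F` in a cubic graph, `3|F| = 2 e(F) + e(F, J) ≤ 2(|F| - 1) + 3|J|`, i.e. `|F| + 2 ≤ 3|J|`,
and adding `|J|` gives `n + 2 ≤ 4|J|`.
-/

open SimpleGraph Finset

namespace SimpleGraph
variable {V : Type*}

theorem IsAcyclic.card_edgeFinset_add_one_le [Fintype V] [Nonempty V] {G : SimpleGraph V}
    [Fintype G.edgeSet] (hG : G.IsAcyclic) : #G.edgeFinset + 1 ≤ Fintype.card V := by
  classical
  obtain ⟨T, hGT, -, hT⟩ := connected_top.exists_isTree_le_of_le_of_isAcyclic le_top hG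
  rw [← hT.card_edgeFinset]
  gcongr

variable [Fintype V] [DecidableEq V] (G : SimpleGraph V) [DecidableRel G.Adj]

theorem degree_induce_coe_finset (s : Finset V) (v : (s : Set V)) :
    (G.induce s).degree v = #(G.neighborFinset v ∩ s) := by
  convert congrArg Finset.card (G.map_neighborFinset_induce v) using 1
  · rw [card_map, card_neighborFinset_eq_degree]
    convert rfl
  · simp

theorem sum_card_neighborFinset_inter_self (s : Finset V) :
    ∑ v ∈ s, #(G.neighborFinset v ∩ s) = 2 * #(G.induce (s : Set V)).edgeFinset := by
  rw [← sum_degrees_eq_twice_card_edges, ← sum_coe_sort s]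
  exact Fintype.sum_congr _ _ fun v => (G.degree_induce_coe_finset s v).symm

theorem card_neighborFinset_inter (v : V) (t : Finset V) :
    #(G.neighborFinset v ∩ t) = ∑ w ∈ t, if G.Adj v w then 1 else 0 := by
  rw [← card_filter, inter_comm, ← filter_mem_eq_inter]
  simp

theorem sum_card_neighborFinset_inter_comm (s t : Finset V) :
    ∑ v ∈ s, #(G.neighborFinset v ∩ t) = ∑ v ∈ t, #(G.neighborFinset v ∩ s) := by
  simp only [card_neighborFinset_inter]
  rw [sum_comm]
  simp only [G.adj_comm]

theorem card_neighborFinset_inter_add_inter_compl (v : V) (s : Finset V) :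
    #(G.neighborFinset v ∩ s) + #(G.neighborFinset v ∩ sᶜ) = G.degree v := by
  rw [← sdiff_eq_inter_compl, card_inter_add_card_sdiff, card_neighborFinset_eq_degree]

variable {G} in
theorem IsRegularOfDegree.mul_card_add_two_le_of_isAcyclic_induce {d : ℕ}
    (hG : G.IsRegularOfDegree d) {s : Finset V} (hs : s.Nonempty)
    (hacyc : (G.induce (s : Set V)).IsAcyclic) : d * #s + 2 ≤ 2 * #s + d * #sᶜ := by
  have : Nonempty (s : Set V) := hs.coe_sort
  have hforest : #(G.induce (s : Set V)).edgeFinset + 1 ≤ #s := by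
    simpa using hacyc.card_edgeFinset_add_one_le
  have hinside := G.sum_card_neighborFinset_inter_self s
  have hcross : ∑ v ∈ s, #(G.neighborFinset v ∩ sᶜ) ≤ d * #sᶜ := by
    rw [sum_card_neighborFinset_inter_comm]
    calc ∑ v ∈ sᶜ, #(G.neighborFinset v ∩ s) ≤ ∑ v ∈ sᶜ, G.degree v :=
          sum_le_sum fun v _ => (card_le_card inter_subset_left).trans_eq
            (card_neighborFinset_eq_degree G v)
      _ = d * #sᶜ := by simp [hG.degree_eq, mul_comm]
  have hsplit : d * #s = ∑ v ∈ s, #(G.neighborFinset v ∩ s) +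
      ∑ v ∈ s, #(G.neighborFinset v ∩ sᶜ) := by
    simp [← sum_add_distrib, card_neighborFinset_inter_add_inter_compl, hG.degree_eq, mul_comm]
  omega

end SimpleGraph

/-- In a connected cubic graph on `n` vertices, any decycling set `J`
(removal leaves an acyclic graph) satisfies `|J| ≥ ⌈(n+2)/4⌉`. -/
theorem stmt1 {V : Type*} [Fintype V] [DecidableEq V] (G : SimpleGraph V)
    [DecidableRel G.Adj] (hconn : G.Connected) (hcubic : ∀ v, G.degree v = 3)
    (J : Finset V) (hJ : (G.induce ((↑J : Set V)ᶜ)).IsAcyclic) :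
    ⌈((Fintype.card V : ℚ) + 2) / 4⌉ ≤ (J.card : ℤ) := by
  have key : Fintype.card V + 2 ≤ 4 * #J := by
    have hJ_le : #J ≤ Fintype.card V := card_le_univ J
    rcases Jᶜ.eq_empty_or_nonempty with hJc | hJc
    · have : 0 < Fintype.card V := Fintype.card_pos_iff.mpr hconn.nonempty
      rw [compl_eq_empty_iff] at hJc
      simp only [hJc, card_univ] at hJ_le ⊢
      omega
    · have := IsRegularOfDegree.mul_card_add_two_le_of_isAcyclic_induce hcubic hJc
        (by rwa [coe_compl])
      rw [compl_compl, card_compl] at this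
      omega
  rw [Int.ceil_le, Int.cast_natCast, div_le_iff₀ (by norm_num), mul_comm]
  exact_mod_cast key
end

section
/- Let G be a cubic graph on n vertices whose vertex set is partitioned into sets A and J such that G[A] is a tree and the induced subgraph G[J] has exactly one edge. Then n ≡ 0 (mod 4) and |J| = (n+2)/4. -/
open SimpleGraph Finset

/-- If the vertex set of a cubic graph is partitioned into `A` and `J` where `A`
induces a tree and `G[J]` has exactly one edge, then `n ≡ 0 (mod 4)` and
`|J| = ⌈(n+2)/4⌉`. -/
theorem stmt3 {V : Type*} [Fintype V] [DecidableEq V] (G : SimpleGraph V)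
    [DecidableRel G.Adj] (hcubic : ∀ v, G.degree v = 3)
    (A J : Finset V) (hdisj : Disjoint A J) (hcover : A ∪ J = Finset.univ)
    (htree : (G.induce (↑A : Set V)).IsTree)
    (hnear : {e | e ∈ G.edgeSet ∧ ∀ v ∈ e, v ∈ (↑J : Set V)}.ncard = 1) :
    Fintype.card V % 4 = 0 ∧ (J.card : ℤ) = ⌈((Fintype.card V : ℚ) + 2) / 4⌉ := by
  classical
  -- Step 1: sum over A of neighbors in A is 2*(A.card - 1), i.e. + 2 = 2*A.card
  have hA1 : A.Nonempty := by
    have := htree.isConnected.nonempty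
    rcases this with ⟨⟨v, hv⟩⟩
    exact ⟨v, hv⟩
  have hdegInd : ∀ v : (↑A : Set V), (G.induce (↑A : Set V)).degree v
      = (A.filter (fun w => G.Adj ↑v w)).card := by
    intro v
    rw [SimpleGraph.degree]
    refine Finset.card_bij (fun w _ => (w : V)) ?_ ?_ ?_
    · intro w hw
      simp only [SimpleGraph.mem_neighborFinset, SimpleGraph.comap_adj] at hw
      simp only [Finset.mem_filter]
      exact ⟨w.2, hw⟩
    · intro x hx y hy h
      exact Subtype.ext h
    · intro w hw
      simp only [Finset.mem_filter] at hw
      exact ⟨⟨w, hw.1⟩, by simpa using hw.2, rfl⟩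
  have htreeCount : (∑ v ∈ A, (A.filter (fun w => G.Adj v w)).card) + 2 = 2 * A.card := by
    have h1 := htree.card_edgeFinset
    have h2 := SimpleGraph.sum_degrees_eq_twice_card_edges (G.induce (↑A : Set V))
    have h3 : ∑ v : (↑A : Set V), (G.induce (↑A : Set V)).degree v
        = ∑ v ∈ A, (A.filter (fun w => G.Adj v w)).card := by
      rw [Finset.sum_congr rfl (fun v _ => hdegInd v)]
      rw [← Finset.sum_attach A (fun v => (A.filter (fun w => G.Adj v w)).card)]
      rfl
    have h1' : Fintype.card ↑(↑A : Set V) = A.card := by simp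
    rw [h1'] at h1
    omega

  -- Step 2: pairs inside J count to 2
  obtain ⟨e, hset⟩ := Set.ncard_eq_one.mp hnear
  have heM : e ∈ {e | e ∈ G.edgeSet ∧ ∀ v ∈ e, v ∈ (↑J : Set V)} := by
    rw [hset]; rfl
  obtain ⟨⟨x, y⟩, rfl⟩ := e.exists_rep
  have hxy : G.Adj x y := heM.1
  have hxJ : x ∈ J := heM.2 x (Sym2.mem_mk_left x y)
  have hyJ : y ∈ J := heM.2 y (Sym2.mem_mk_right x y)
  have hxyne : x ≠ y := hxy.ne
  have hPJ : (J ×ˢ J).filter (fun p => G.Adj p.1 p.2) = {(x, y), (y, x)} := by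
    ext ⟨v, w⟩
    simp only [Finset.mem_filter, Finset.mem_product, Finset.mem_insert,
      Finset.mem_singleton, Prod.mk.injEq]
    constructor
    · rintro ⟨⟨hv, hw⟩, hadj⟩
      have hmem : s(v, w) ∈ {e | e ∈ G.edgeSet ∧ ∀ u ∈ e, u ∈ (↑J : Set V)} := by
        refine ⟨hadj, fun u hu => ?_⟩
        rcases Sym2.mem_iff.mp hu with rfl | rfl
        · exact hv
        · exact hw
      rw [hset, Set.mem_singleton_iff] at hmem
      have := Sym2.eq_iff.mp hmem
      tauto
    · rintro (⟨rfl, rfl⟩ | ⟨rfl, rfl⟩)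
      · exact ⟨⟨hxJ, hyJ⟩, hxy⟩
      · exact ⟨⟨hyJ, hxJ⟩, hxy.symm⟩
  have hJcount : (∑ v ∈ J, (J.filter (fun w => G.Adj v w)).card) = 2 := by
    have h1 : (∑ v ∈ J, (J.filter (fun w => G.Adj v w)).card)
        = ((J ×ˢ J).filter (fun p => G.Adj p.1 p.2)).card := by
      rw [Finset.card_filter, Finset.sum_product]
      simp only [Finset.card_filter]
    rw [h1, hPJ]
    rw [Finset.card_insert_of_notMem (by simp [hxyne.symm, Prod.ext_iff]),
      Finset.card_singleton]
  -- Step 3: degree split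
  have hsplit : ∀ v, (A.filter (fun w => G.Adj v w)).card
      + (J.filter (fun w => G.Adj v w)).card = 3 := by
    intro v
    rw [← hcubic v, SimpleGraph.degree, SimpleGraph.neighborFinset_eq_filter, ← hcover,
      Finset.filter_union, Finset.card_union_of_disjoint
        (Finset.disjoint_filter_filter hdisj)]
  -- Step 4/5: sums over A and J
  have hsumA : (∑ v ∈ A, (A.filter (fun w => G.Adj v w)).card)
      + (∑ v ∈ A, (J.filter (fun w => G.Adj v w)).card) = 3 * A.card := by
    rw [← Finset.sum_add_distrib]
    rw [Finset.sum_congr rfl (fun v _ => hsplit v)]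
    simp [mul_comm]
  have hsumJ : (∑ v ∈ J, (A.filter (fun w => G.Adj v w)).card)
      + (∑ v ∈ J, (J.filter (fun w => G.Adj v w)).card) = 3 * J.card := by
    rw [← Finset.sum_add_distrib]
    rw [Finset.sum_congr rfl (fun v _ => hsplit v)]
    simp [mul_comm]
  -- Step 6: cross counts agree
  have hXY : (∑ v ∈ A, (J.filter (fun w => G.Adj v w)).card)
      = (∑ v ∈ J, (A.filter (fun w => G.Adj v w)).card) := by
    simp only [Finset.card_filter]
    rw [Finset.sum_comm]
    exact Finset.sum_congr rfl fun v _ => Finset.sum_congr rfl fun w _ =>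
      if_congr (G.adj_comm w v) rfl rfl
  -- Step 7: arithmetic
  have hn : Fintype.card V = A.card + J.card := by
    rw [← Finset.card_univ, ← hcover, Finset.card_union_of_disjoint hdisj]
  have hkey : 4 * J.card = Fintype.card V + 4 := by omega
  have hmod : Fintype.card V % 4 = 0 := by omega
  refine ⟨hmod, ?_⟩
  have hq : ((Fintype.card V : ℚ) + 2) / 4 = (J.card : ℚ) - 1 / 2 := by
    have : (4 : ℚ) * J.card = (Fintype.card V : ℚ) + 4 := by exact_mod_cast hkey
    field_simp
    linarith
  rw [hq, show (J.card : ℚ) - 1 / 2 = ((J.card : ℤ) : ℚ) - 1 / 2 by push_cast; ring]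
  symm
  rw [Int.ceil_eq_iff]
  constructor <;> push_cast <;> linarith
end

section
/- Let G be a connected cubic graph with vertex partition {A, J} where A induces a tree T and J is independent. Extending T by one edge from each vertex of J to T yields a spanning tree S⁺ of G in which every vertex of J is a leaf, and every component of the cotree G − E(S⁺) has an even number of edges. -/
open SimpleGraph Finset

/-- The set of edges of `H` lying in the connected component `c` of `H`. -/
def cotreeCompEdges {V : Type*} (H : SimpleGraph V) (c : H.ConnectedComponent) :
    Set (Sym2 V) :=
  {e | e ∈ H.edgeSet ∧ ∀ v ∈ e, H.connectedComponentMk v = c}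

/-!
Since `J` is independent, every `v ∈ J` has a neighbour `f v ∈ A`; `S⁺` is `T` plus the edges
`v — f v`. It is connected, and it has `(|A| - 1) + |J| = |V| - 1` edges, so it is a tree.
Every cotree edge leaves `A` (all edges inside `A` are in `S⁺`) and cannot stay in `J`, so the
cotree is bipartite with sides `J` and `A`. Counting the edges of a cotree component from the
`J` side gives the sum of the cotree degrees of its `J`-vertices, each of which is `3 - 1 = 2`.
-/

namespace SimpleGraph

variable {V : Type*}

theorem IsBipartiteWith.mono {G H : SimpleGraph V} {s t : Set V} (hle : H ≤ G)
    (h : G.IsBipartiteWith s t) : H.IsBipartiteWith s t :=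
  ⟨h.disjoint, fun _ _ hvw ↦ h.mem_of_adj (hle hvw)⟩

namespace ConnectedComponent

variable {H : SimpleGraph V} (c : H.ConnectedComponent)

theorem spanningCoe_toSubgraph_adj {u v : V} :
    c.toSubgraph.spanningCoe.Adj u v ↔ H.Adj u v ∧ u ∈ c.supp ∧ v ∈ c.supp := by
  simp only [Subgraph.spanningCoe_adj, Subgraph.induce_adj, Subgraph.top_adj]
  tauto

theorem edgeSet_spanningCoe_toSubgraph :
    c.toSubgraph.spanningCoe.edgeSet = cotreeCompEdges H c := by
  ext e
  induction e with
  | h u v =>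
    rw [mem_edgeSet, spanningCoe_toSubgraph_adj]
    simp [cotreeCompEdges]

theorem neighborSet_spanningCoe_toSubgraph_of_mem {v : V} (hv : v ∈ c.supp) :
    c.toSubgraph.spanningCoe.neighborSet v = H.neighborSet v := by
  ext w
  simp only [mem_neighborSet, spanningCoe_toSubgraph_adj, and_iff_left_iff_imp]
  exact fun hvw ↦ ⟨hv, (mem_supp_congr_adj c hvw).1 hv⟩

theorem neighborSet_spanningCoe_toSubgraph_of_notMem {v : V} (hv : v ∉ c.supp) :
    c.toSubgraph.spanningCoe.neighborSet v = ∅ := by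
  ext w
  simp only [mem_neighborSet, spanningCoe_toSubgraph_adj, hv, false_and, and_false]
  rfl

end ConnectedComponent

theorem even_ncard_cotreeCompEdges [Fintype V] {H : SimpleGraph V} [DecidableRel H.Adj]
    {s t : Finset V} (hst : H.IsBipartiteWith s t) (hs : ∀ v ∈ s, Even (H.degree v))
    (c : H.ConnectedComponent) : Even (cotreeCompEdges H c).ncard := by
  classical
  have hdeg : ∀ v ∈ s, Even (c.toSubgraph.spanningCoe.degree v) := by
    intro v hv
    rw [← card_neighborSet_eq_degree]
    by_cases hvc : v ∈ c.supp
    · rw [Fintype.card_congr (Equiv.setCongr (c.neighborSet_spanningCoe_toSubgraph_of_mem hvc)),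
        card_neighborSet_eq_degree]
      exact hs v hv
    · rw [Fintype.card_congr (Equiv.setCongr (c.neighborSet_spanningCoe_toSubgraph_of_notMem hvc)),
        Fintype.card_eq_zero]
      exact .zero
  rw [← c.edgeSet_spanningCoe_toSubgraph, ← coe_edgeFinset, Set.ncard_coe_finset,
    ← isBipartiteWith_sum_degrees_eq_card_edges (hst.mono (Subgraph.spanningCoe_le _))]
  exact Finset.even_sum _ hdeg

section AttachLeaves

variable (G : SimpleGraph V) (A : Set V) (f : V → V)

def attachLeaves : SimpleGraph V where
  Adj u v := G.Adj u v ∧ (u ∈ A ∧ v ∈ A ∨ u ∉ A ∧ v = f u ∨ v ∉ A ∧ u = f v)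
  symm := ⟨fun _ _ h ↦ ⟨h.1.symm, by tauto⟩⟩
  loopless := ⟨fun v h ↦ G.loopless.irrefl v h.1⟩

variable {G A f}

theorem attachLeaves_le : attachLeaves G A f ≤ G := fun _ _ h ↦ h.1

theorem attachLeaves_adj_of_mem {u v : V} (hu : u ∈ A) (hv : v ∈ A) (h : G.Adj u v) :
    (attachLeaves G A f).Adj u v :=
  ⟨h, .inl ⟨hu, hv⟩⟩

theorem isBipartiteWith_sdiff_attachLeaves (hind : ∀ u ∉ A, ∀ v ∉ A, ¬G.Adj u v) :
    (G \ attachLeaves G A f).IsBipartiteWith Aᶜ A where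
  disjoint := disjoint_compl_left
  mem_of_adj u v := by
    rintro ⟨huv, hS⟩
    by_cases hu : u ∈ A <;> by_cases hv : v ∈ A
    · exact absurd (attachLeaves_adj_of_mem hu hv huv) hS
    · exact .inr ⟨hu, hv⟩
    · exact .inl ⟨hu, hv⟩
    · exact absurd huv (hind u hu v hv)

variable (hf : ∀ v ∉ A, G.Adj v (f v) ∧ f v ∈ A)
include hf

theorem attachLeaves_adj_iff_of_notMem {u v : V} (hv : v ∉ A) :
    (attachLeaves G A f).Adj v u ↔ u = f v := by
  constructor
  · rintro ⟨-, ⟨hvA, -⟩ | ⟨-, rfl⟩ | ⟨huA, rfl⟩⟩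
    · exact absurd hvA hv
    · rfl
    · exact absurd (hf u huA).2 hv
  · rintro rfl
    exact ⟨(hf v hv).1, .inr (.inl ⟨hv, rfl⟩)⟩

theorem neighborSet_attachLeaves_of_notMem {v : V} (hv : v ∉ A) :
    (attachLeaves G A f).neighborSet v = {f v} := by
  ext u
  exact attachLeaves_adj_iff_of_notMem hf hv

theorem degree_sdiff_attachLeaves_add_one {v : V} [Fintype (G.neighborSet v)]
    [Fintype ((G \ attachLeaves G A f).neighborSet v)] (hv : v ∉ A) :
    (G \ attachLeaves G A f).degree v + 1 = G.degree v := by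
  classical
  rw [← card_neighborFinset_eq_degree, ← card_neighborFinset_eq_degree,
    ← Finset.card_erase_add_one ((mem_neighborFinset _ _ _).2 (hf v hv).1)]
  congr 2
  ext u
  simp only [mem_neighborFinset, sdiff_adj, attachLeaves_adj_iff_of_notMem hf hv,
    Finset.mem_erase, and_comm]

theorem connected_attachLeaves (hA : (G.induce A).Connected) :
    (attachLeaves G A f).Connected := by
  have hreachA : ∀ u ∈ A, ∀ v ∈ A, (attachLeaves G A f).Reachable u v := fun u hu v hv ↦
    (hA.preconnected ⟨u, hu⟩ ⟨v, hv⟩).map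
      ⟨Subtype.val, fun {a b} hab ↦ attachLeaves_adj_of_mem a.2 b.2 hab⟩
  have hreach : ∀ u, ∃ a ∈ A, (attachLeaves G A f).Reachable u a := by
    intro u
    by_cases hu : u ∈ A
    · exact ⟨u, hu, .rfl⟩
    · exact ⟨f u, (hf u hu).2, ((attachLeaves_adj_iff_of_notMem hf hu).2 rfl).reachable⟩
  have : Nonempty V := hA.nonempty.map Subtype.val
  refine ⟨fun u v ↦ ?_⟩
  obtain ⟨a, ha, hua⟩ := hreach u
  obtain ⟨b, hb, hvb⟩ := hreach v
  exact hua.trans ((hreachA a ha b hb).trans hvb.symm)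

theorem edgeSet_attachLeaves :
    (attachLeaves G A f).edgeSet =
      Sym2.map Subtype.val '' (G.induce A).edgeSet ∪ (fun v ↦ s(v, f v)) '' Aᶜ := by
  ext e
  induction e with
  | h u v =>
    simp only [mem_edgeSet, Set.mem_union, Set.mem_image, Sym2.exists, Subtype.exists,
      comap_adj, Function.Embedding.subtype_apply, Sym2.map_mk, Sym2.eq_iff]
    constructor
    · rintro ⟨huv, ⟨hu, hv⟩ | ⟨hu, rfl⟩ | ⟨hv, rfl⟩⟩
      · exact .inl ⟨u, hu, v, hv, huv, .inl ⟨rfl, rfl⟩⟩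
      · exact .inr ⟨u, hu, .inl ⟨rfl, rfl⟩⟩
      · exact .inr ⟨v, hv, .inr ⟨rfl, rfl⟩⟩
    · rintro (⟨a, ha, b, hb, hab, ⟨rfl, rfl⟩ | ⟨rfl, rfl⟩⟩ | ⟨w, hw, ⟨rfl, rfl⟩ | ⟨rfl, rfl⟩⟩)
      · exact attachLeaves_adj_of_mem ha hb hab
      · exact attachLeaves_adj_of_mem hb ha hab.symm
      · exact (attachLeaves_adj_iff_of_notMem hf hw).2 rfl
      · exact ((attachLeaves_adj_iff_of_notMem hf hw).2 rfl).symm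

theorem isTree_attachLeaves [Finite V] (hA : (G.induce A).IsTree) :
    (attachLeaves G A f).IsTree := by
  have hdisj : Disjoint (Sym2.map Subtype.val '' (G.induce A).edgeSet)
      ((fun v ↦ s(v, f v)) '' Aᶜ) := by
    rw [Set.disjoint_left]
    rintro _ ⟨e, -, rfl⟩ ⟨w, hw, hwe⟩
    have hwe' : w ∈ Sym2.map Subtype.val e := hwe ▸ Sym2.mem_mk_left w (f w)
    obtain ⟨a, -, rfl⟩ := Sym2.mem_map.1 hwe'
    exact hw a.2
  have hinj : Set.InjOn (fun v ↦ s(v, f v)) Aᶜ := by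
    intro a ha b hb hab
    rcases Sym2.eq_iff.1 hab with ⟨h, -⟩ | ⟨h, -⟩
    · exact h
    · exact absurd (h ▸ (hf b hb).2) ha
  have hcardA := (isTree_iff_connected_and_card.1 hA).2
  rw [Nat.card_coe_set_eq, Nat.card_coe_set_eq] at hcardA
  rw [isTree_iff_connected_and_card, Nat.card_coe_set_eq, edgeSet_attachLeaves hf,
    Set.ncard_union_eq hdisj, Set.ncard_image_of_injective _ (Sym2.map.injective
      Subtype.val_injective), hinj.ncard_image, add_right_comm, hcardA,
    Set.ncard_add_ncard_compl]
  exact ⟨connected_attachLeaves hf hA.connected, rfl⟩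

end AttachLeaves

end SimpleGraph

theorem stmt5_general {V : Type*} [Fintype V] [DecidableEq V] (G : SimpleGraph V)
    [DecidableRel G.Adj] (hcubic : ∀ v, G.degree v = 3)
    (A J : Finset V) (hdisj : Disjoint A J) (hcover : A ∪ J = Finset.univ)
    (htree : (G.induce (↑A : Set V)).IsTree)
    (hind : ∀ u ∈ J, ∀ v ∈ J, ¬ G.Adj u v) :
    ∃ S : SimpleGraph V, S ≤ G ∧ S.IsTree ∧
      (∀ u ∈ A, ∀ v ∈ A, G.Adj u v → S.Adj u v) ∧
      (∀ v ∈ J, (S.neighborSet v).ncard = 1) ∧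
      (∀ c : (G \ S).ConnectedComponent, Even ((cotreeCompEdges (G \ S) c).ncard)) := by
  classical
  have hJ : J = Aᶜ := IsCompl.eq_compl ⟨hdisj.symm, codisjoint_iff.2 (sup_comm A J ▸ hcover)⟩
  have hmemJ : ∀ v, v ∈ J ↔ v ∉ A := by simp [hJ]
  have hind' : ∀ u ∉ (A : Set V), ∀ v ∉ (A : Set V), ¬G.Adj u v := by
    simpa only [hmemJ, Finset.mem_coe] using hind
  have hnbr : ∀ v ∉ (A : Set V), ∃ w, G.Adj v w ∧ w ∈ (A : Set V) := by
    intro v hv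
    obtain ⟨w, hvw⟩ := (G.degree_pos_iff_exists_adj v).1 (by rw [hcubic]; norm_num)
    exact ⟨w, hvw, by_contra fun hw ↦ hind' v hv w hw hvw⟩
  choose! f hf using hnbr
  refine ⟨attachLeaves G A f, attachLeaves_le, isTree_attachLeaves hf htree,
    fun u hu v hv ↦ attachLeaves_adj_of_mem hu hv, fun v hv ↦ ?_, fun c ↦ ?_⟩
  · rw [neighborSet_attachLeaves_of_notMem hf ((hmemJ v).1 hv), Set.ncard_singleton]
  · refine even_ncard_cotreeCompEdges (s := J) (t := A) ?_ (fun v hv ↦ ?_) c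
    · rw [hJ, coe_compl]
      exact isBipartiteWith_sdiff_attachLeaves hind'
    · have hdeg := degree_sdiff_attachLeaves_add_one hf ((hmemJ v).1 hv)
      rw [hcubic] at hdeg
      exact ⟨1, by omega⟩

/-- Given a partition `{A, J}` of a connected cubic graph with `A` inducing a tree `T`
and `J` independent, there is a spanning tree `S⁺` of `G` containing `T` in which every
vertex of `J` is a leaf, and every component of the cotree `G − E(S⁺)` is even. -/
theorem stmt5 {V : Type*} [Fintype V] [DecidableEq V] (G : SimpleGraph V)
    [DecidableRel G.Adj] (hconn : G.Connected) (hcubic : ∀ v, G.degree v = 3)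
    (A J : Finset V) (hdisj : Disjoint A J) (hcover : A ∪ J = Finset.univ)
    (htree : (G.induce (↑A : Set V)).IsTree)
    (hind : ∀ u ∈ J, ∀ v ∈ J, ¬ G.Adj u v) :
    ∃ S : SimpleGraph V, S ≤ G ∧ S.IsTree ∧
      (∀ u ∈ A, ∀ v ∈ A, G.Adj u v → S.Adj u v) ∧
      (∀ v ∈ J, (S.neighborSet v).ncard = 1) ∧
      (∀ c : (G \ S).ConnectedComponent, Even ((cotreeCompEdges (G \ S) c).ncard)) :=
  stmt5_general G hcubic A J hdisj hcover htree hind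
end

section
/- Let G be a connected cubic graph with a vertex partition {A, J} such that A induces a forest with exactly two tree components and J is an independent set. Then G has a spanning tree whose cotree has exactly one component with an odd number of edges. -/
/-!
Connectivity of `G` and independence of `J` give a vertex `j₀ ∈ J` with neighbours `a₁ ∈ A₁` and
`a₂ ∈ A₂`. Let `T` consist of the edges of `G` inside `A`, the edges `j₀a₁`, `j₀a₂`, and one edge
from every other vertex of `J`. It is connected and has
`(#A₁ - 1) + (#A₂ - 1) + 2 + (#J - 1) = #V - 1` edges, so it is a spanning tree. Every edge of the
cotree has exactly one end in `J`, so a cotree component has as many edges as the cotree degrees of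
its vertices in `J` add up to. These degrees are `3 - 2 = 1` at `j₀` and `3 - 1 = 2` elsewhere,
so the component of `j₀` is the only odd one.
-/

open SimpleGraph Finset

namespace SimpleGraph

variable {V : Type*}

theorem Preconnected.reachable_of_induce {G H : SimpleGraph V} {s : Set V}
    (h : (G.induce s).Preconnected) (hle : ∀ x ∈ s, ∀ y ∈ s, G.Adj x y → H.Adj x y) {x y : V}
    (hx : x ∈ s) (hy : y ∈ s) : H.Reachable x y :=
  (h ⟨x, hx⟩ ⟨y, hy⟩).map ⟨Subtype.val, fun {a b} hab => hle a a.2 b b.2 hab⟩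

theorem Connected.exists_adj_adj_of_notMem [DecidableEq V] {G : SimpleGraph V}
    (hconn : G.Connected) {A₁ A₂ : Finset V} (hA₁ : A₁.Nonempty) (hA₂ : A₂.Nonempty)
    (h12 : Disjoint A₁ A₂) (hno : ∀ u ∈ A₁, ∀ v ∈ A₂, ¬G.Adj u v) (hindep : ∀ u ∉ A₁ ∪ A₂, ∀ v ∉ A₁ ∪ A₂, ¬G.Adj u v) :
    ∃ j ∉ A₁ ∪ A₂, ∃ a₁ ∈ A₁, G.Adj j a₁ ∧ ∃ a₂ ∈ A₂, G.Adj j a₂ := by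
  obtain ⟨x, hx⟩ := hA₁
  obtain ⟨y, hy⟩ := hA₂
  by_contra! h
  let X : Set V := {v | v ∈ A₁ ∨ (v ∉ A₁ ∪ A₂ ∧ ∃ a ∈ A₁, G.Adj v a)}
  have hyX : y ∉ X := by
    rintro (hy₁ | ⟨hyA, -⟩)
    · exact Finset.disjoint_left.1 h12 hy₁ hy
    · exact hyA (mem_union_right _ hy)
  obtain ⟨⟨⟨u, v⟩, huv⟩, -, hu, hv⟩ :=
    (hconn.preconnected x y).some.exists_boundary_dart X (.inl hx) hyX
  simp only [X, Set.mem_ofPred_eq, not_or, not_and, not_exists] at hu hv huv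
  rcases hu with hu₁ | ⟨huA, a, ha, hua⟩ <;> by_cases hvA : v ∈ A₁ ∪ A₂
  · exact hno u hu₁ v ((mem_union.1 hvA).resolve_left hv.1) huv
  · exact hv.2 hvA u hu₁ huv.symm
  · exact h u huA a ha hua v ((mem_union.1 hvA).resolve_left hv.1) huv
  · exact hindep u huA v hvA huv

theorem exists_finset_adj_card_eq_ite [DecidableEq V] {G : SimpleGraph V}
    (hnbr : ∀ v, ∃ w, G.Adj v w) {j a₁ a₂ : V} (hja₁ : G.Adj j a₁) (hja₂ : G.Adj j a₂)
    (ha₁₂ : a₁ ≠ a₂) :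
    ∃ N : V → Finset V, (∀ v, ∀ w ∈ N v, G.Adj v w) ∧ a₁ ∈ N j ∧ a₂ ∈ N j ∧
      ∀ v, #(N v) = if v = j then 2 else 1 := by
  choose f hf using hnbr
  refine ⟨fun v => if v = j then {a₁, a₂} else {f v}, fun v w hw => ?_, by simp, by simp,
    fun v => by by_cases hv : v = j <;> simp [hv, ha₁₂]⟩
  by_cases hv : v = j
  · subst hv
    simp only [if_pos, mem_insert, mem_singleton] at hw
    rcases hw with rfl | rfl <;> assumption
  · simp only [hv, if_false, mem_singleton] at hw
    exact hw ▸ hf v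

section Counting

variable [Fintype V] [DecidableEq V] {H : SimpleGraph V} [DecidableRel H.Adj]

theorem degree_sdiff_add_degree {G : SimpleGraph V} [DecidableRel G.Adj] (hle : H ≤ G) (v : V) :
    (G \ H).degree v + H.degree v = G.degree v := by
  simp only [← card_neighborFinset_eq_degree, neighborFinset_sdiff]
  rw [card_sdiff_add_card_eq_card]
  intro w
  simpa only [mem_neighborFinset] using @hle v w

theorem card_filter_edgeFinset_exists_mem {S : Finset V} (hS : ∀ u ∈ S, ∀ v ∈ S, ¬H.Adj u v) :
    #{e ∈ H.edgeFinset | ∃ v ∈ S, v ∈ e} = ∑ v ∈ S, H.degree v := by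
  have hunion : {e ∈ H.edgeFinset | ∃ v ∈ S, v ∈ e} = S.biUnion (H.incidenceFinset ·) := by
    ext e
    simp only [mem_filter, mem_biUnion, mem_incidenceFinset, mem_edgeFinset]
    grind [incidenceSet]
  rw [hunion, card_biUnion]
  · exact sum_congr rfl fun v _ => card_incidenceFinset_eq_degree H v
  · intro u hu v hv huv
    rw [Function.onFun, ← disjoint_coe, coe_incidenceFinset, coe_incidenceFinset, Set.disjoint_iff]
    exact fun e he => hS u hu v hv (H.adj_of_mem_incidenceSet huv he.1 he.2)

theorem IsTree.card_filter_edgeFinset_subset_add_one {s : Finset V} (h : (H.induce ↑s).IsTree) :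
    #{e ∈ H.edgeFinset | e.toFinset ⊆ s} + 1 = #s := by
  rw [card_filter_edgeFinset_toFinset_subset, h.card_edgeFinset]
  simp

theorem card_filter_edgeFinset_subset_union {s t : Finset V} (hst : Disjoint s t)
    (hno : ∀ u ∈ s, ∀ v ∈ t, ¬H.Adj u v) :
    #{e ∈ H.edgeFinset | e.toFinset ⊆ s ∪ t} =
      #{e ∈ H.edgeFinset | e.toFinset ⊆ s} + #{e ∈ H.edgeFinset | e.toFinset ⊆ t} := by
  rw [← card_union_of_disjoint, ← filter_or]
  · congr 1
    refine filter_congr fun e he => ?_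
    induction e with
    | h x y =>
      have hxy : H.Adj x y := mem_edgeFinset.1 he
      have := hxy.symm
      simp only [Sym2.toFinset_mk_eq, insert_subset_iff, singleton_subset_iff, mem_union]
      grind
  · refine disjoint_filter.2 fun e _ hs ht => e.toFinset_ne_empty ?_
    exact subset_empty.1 (disjoint_iff_inter_eq_empty.1 hst ▸ subset_inter hs ht)

theorem ncard_cotreeCompEdges [DecidableEq H.ConnectedComponent] {S : Finset V}
    (hS : ∀ u ∈ S, ∀ v ∈ S, ¬H.Adj u v) (hcover : ∀ u v, H.Adj u v → u ∈ S ∨ v ∈ S)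
    (c : H.ConnectedComponent) :
    (cotreeCompEdges H c).ncard = ∑ v ∈ S with H.connectedComponentMk v = c, H.degree v := by
  have hmk : ∀ {x y}, H.Adj x y → H.connectedComponentMk x = H.connectedComponentMk y :=
    fun hxy => ConnectedComponent.sound hxy.reachable
  have hedges : cotreeCompEdges H c =
      ↑{e ∈ H.edgeFinset | ∃ v ∈ {v ∈ S | H.connectedComponentMk v = c}, v ∈ e} := by
    ext e
    induction e with
    | h x y =>
      simp only [cotreeCompEdges, Set.mem_ofPred_eq, coe_filter, mem_edgeFinset, mem_edgeSet,
        mem_filter, Sym2.mem_iff, forall_eq_or_imp, forall_eq]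
      constructor
      · rintro ⟨hxy, hx, hy⟩
        rcases hcover x y hxy with hxS | hyS
        · exact ⟨hxy, x, ⟨hxS, hx⟩, .inl rfl⟩
        · exact ⟨hxy, y, ⟨hyS, hy⟩, .inr rfl⟩
      · rintro ⟨hxy, v, ⟨-, hv⟩, rfl | rfl⟩
        · exact ⟨hxy, hv, (hmk hxy).symm.trans hv⟩
        · exact ⟨hxy, (hmk hxy).trans hv, hv⟩
  rw [hedges, Set.ncard_coe_finset, card_filter_edgeFinset_exists_mem]
  exact fun u hu v hv => hS u (mem_filter.1 hu).1 v (mem_filter.1 hv).1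

theorem odd_ncard_cotreeCompEdges_iff [DecidableEq H.ConnectedComponent] {S : Finset V}
    (hS : ∀ u ∈ S, ∀ v ∈ S, ¬H.Adj u v) (hcover : ∀ u v, H.Adj u v → u ∈ S ∨ v ∈ S) {j : V}
    (hj : j ∈ S) (hodd : ∀ v ∈ S, Odd (H.degree v) ↔ v = j) (c : H.ConnectedComponent) :
    Odd (cotreeCompEdges H c).ncard ↔ H.connectedComponentMk j = c := by
  rw [ncard_cotreeCompEdges hS hcover, odd_sum_iff_odd_card_odd, filter_filter]
  have hfilter : {v ∈ S | H.connectedComponentMk v = c ∧ Odd (H.degree v)} =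
      {v ∈ ({j} : Finset V) | H.connectedComponentMk v = c} := by
    ext v
    simp only [mem_filter, mem_singleton]
    grind
  rw [hfilter, filter_singleton]
  split_ifs with h <;> simp [h]

end Counting

def attachOutside (G : SimpleGraph V) (A : Finset V) (N : V → Finset V) : SimpleGraph V :=
  G ⊓ fromRel fun x y => (x ∈ A ∧ y ∈ A) ∨ (x ∉ A ∧ y ∈ N x)

section AttachOutside

variable {G : SimpleGraph V} {A : Finset V} {N : V → Finset V} {x y : V}

theorem attachOutside_le : G.attachOutside A N ≤ G := inf_le_left

theorem attachOutside_adj_of_mem (hx : x ∈ A) (hy : y ∈ A) :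
    (G.attachOutside A N).Adj x y ↔ G.Adj x y := by
  simp only [attachOutside, inf_adj, fromRel_adj]
  exact ⟨And.left, fun h => ⟨h, h.ne, .inl (.inl ⟨hx, hy⟩)⟩⟩

theorem attachOutside_adj_of_notMem (hindep : ∀ u ∉ A, ∀ v ∉ A, ¬G.Adj u v) (hx : x ∉ A) :
    (G.attachOutside A N).Adj x y ↔ G.Adj x y ∧ y ∈ N x := by
  simp only [attachOutside, inf_adj, fromRel_adj]
  grind

theorem notMem_or_notMem_of_sdiff_attachOutside_adj
    (h : (G \ G.attachOutside A N).Adj x y) : x ∉ A ∨ y ∉ A := by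
  by_contra! hxy
  exact h.2 ((attachOutside_adj_of_mem hxy.1 hxy.2).2 h.1)

variable [DecidableEq V]

theorem connected_attachOutside {A₁ A₂ : Finset V} (h₁ : (G.induce ↑A₁).Connected)
    (h₂ : (G.induce ↑A₂).Connected) (hindep : ∀ u ∉ A₁ ∪ A₂, ∀ v ∉ A₁ ∪ A₂, ¬G.Adj u v)
    (hN : ∀ x ∉ A₁ ∪ A₂, ∀ y ∈ N x, G.Adj x y) (hNne : ∀ x ∉ A₁ ∪ A₂, (N x).Nonempty)
    {j a₁ a₂ : V} (hj : j ∉ A₁ ∪ A₂) (ha₁ : a₁ ∈ A₁) (ha₂ : a₂ ∈ A₂) (hja₁ : a₁ ∈ N j)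
    (hja₂ : a₂ ∈ N j) : (G.attachOutside (A₁ ∪ A₂) N).Connected := by
  set T := G.attachOutside (A₁ ∪ A₂) N
  have hadj : ∀ x ∉ A₁ ∪ A₂, ∀ y ∈ N x, T.Adj x y := fun x hx y hy =>
    (attachOutside_adj_of_notMem hindep hx).2 ⟨hN x hx y hy, hy⟩
  have hreach : ∀ {s : Finset V}, s ⊆ A₁ ∪ A₂ → (G.induce ↑s).Connected →
      ∀ x ∈ s, ∀ y ∈ s, T.Reachable x y := fun hs h x hx y hy =>
    h.preconnected.reachable_of_induce
      (fun u hu v hv => (attachOutside_adj_of_mem (hs hu) (hs hv)).2) hx hy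
  have hA : ∀ x ∈ A₁ ∪ A₂, T.Reachable x a₁ := by
    intro x hx
    rcases mem_union.1 hx with hx | hx
    · exact hreach subset_union_left h₁ x hx a₁ ha₁
    · exact (hreach subset_union_right h₂ x hx a₂ ha₂).trans
        ((hadj j hj a₂ hja₂).reachable.symm.trans (hadj j hj a₁ hja₁).reachable)
  refine (connected_iff_exists_forall_reachable T).2 ⟨a₁, fun x => ?_⟩
  by_cases hx : x ∈ A₁ ∪ A₂
  · exact (hA x hx).symm
  · obtain ⟨y, hy⟩ := hNne x hx
    have hyA : y ∈ A₁ ∪ A₂ := by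
      by_contra hyA
      exact hindep x hx y hyA (hN x hx y hy)
    exact ((hadj x hx y hy).reachable.trans (hA y hyA)).symm

variable [DecidableRel G.Adj]

instance : DecidableRel (G.attachOutside A N).Adj :=
  inferInstanceAs (DecidableRel (G ⊓ fromRel _).Adj)

variable [Fintype V]

theorem degree_attachOutside_of_notMem (hindep : ∀ u ∉ A, ∀ v ∉ A, ¬G.Adj u v)
    (hN : ∀ y ∈ N x, G.Adj x y) (hx : x ∉ A) :
    (G.attachOutside A N).degree x = #(N x) := by
  rw [← card_neighborFinset_eq_degree]
  congr 1
  ext y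
  rw [mem_neighborFinset, attachOutside_adj_of_notMem hindep hx]
  exact ⟨And.right, fun hy => ⟨hN y hy, hy⟩⟩

theorem degree_sdiff_attachOutside_of_notMem (hindep : ∀ u ∉ A, ∀ v ∉ A, ¬G.Adj u v)
    (hN : ∀ y ∈ N x, G.Adj x y) (hx : x ∉ A) :
    (G \ G.attachOutside A N).degree x = G.degree x - #(N x) := by
  rw [← degree_attachOutside_of_notMem hindep hN hx,
    ← degree_sdiff_add_degree (attachOutside_le (G := G)) x, Nat.add_sub_cancel]

theorem card_edgeSet_attachOutside (hindep : ∀ u ∉ A, ∀ v ∉ A, ¬G.Adj u v)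
    (hN : ∀ x ∉ A, ∀ y ∈ N x, G.Adj x y) :
    Nat.card (G.attachOutside A N).edgeSet =
      #{e ∈ G.edgeFinset | e.toFinset ⊆ A} + ∑ x ∈ Aᶜ, #(N x) := by
  set T := G.attachOutside A N
  have hinside : {e ∈ T.edgeFinset | e.toFinset ⊆ A} = {e ∈ G.edgeFinset | e.toFinset ⊆ A} := by
    ext e
    induction e with
    | h x y =>
      simp only [mem_filter, mem_edgeFinset, mem_edgeSet, Sym2.toFinset_mk_eq, insert_subset_iff,
        singleton_subset_iff]
      exact ⟨fun ⟨h, hA⟩ => ⟨(attachOutside_adj_of_mem hA.1 hA.2).1 h, hA⟩,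
        fun ⟨h, hA⟩ => ⟨(attachOutside_adj_of_mem hA.1 hA.2).2 h, hA⟩⟩
  have houtside :
      {e ∈ T.edgeFinset | ¬e.toFinset ⊆ A} = {e ∈ T.edgeFinset | ∃ v ∈ Aᶜ, v ∈ e} := by
    ext e
    simp only [mem_filter, not_subset, Sym2.mem_toFinset, mem_compl, and_comm (a := _ ∈ e)]
  rw [Nat.card_eq_fintype_card, ← edgeFinset_card, ← card_filter_add_card_filter_not
    (fun e => e.toFinset ⊆ A), hinside, houtside, card_filter_edgeFinset_exists_mem]
  · exact congrArg _ (sum_congr rfl fun v hv =>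
      degree_attachOutside_of_notMem hindep (hN v (mem_compl.1 hv)) (mem_compl.1 hv))
  · intro u hu v hv h
    exact hindep u (mem_compl.1 hu) v (mem_compl.1 hv) (attachOutside_le h)

theorem isTree_attachOutside {A₁ A₂ : Finset V} (h₁ : (G.induce ↑A₁).IsTree)
    (h₂ : (G.induce ↑A₂).IsTree) (h12 : Disjoint A₁ A₂) (hno : ∀ u ∈ A₁, ∀ v ∈ A₂, ¬G.Adj u v)
    (hindep : ∀ u ∉ A₁ ∪ A₂, ∀ v ∉ A₁ ∪ A₂, ¬G.Adj u v)
    (hN : ∀ x ∉ A₁ ∪ A₂, ∀ y ∈ N x, G.Adj x y) {j a₁ a₂ : V} (hj : j ∉ A₁ ∪ A₂)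
    (ha₁ : a₁ ∈ A₁) (ha₂ : a₂ ∈ A₂) (hja₁ : a₁ ∈ N j) (hja₂ : a₂ ∈ N j)
    (hcard : ∀ x ∉ A₁ ∪ A₂, #(N x) = if x = j then 2 else 1) :
    (G.attachOutside (A₁ ∪ A₂) N).IsTree := by
  have hj' : j ∈ (A₁ ∪ A₂)ᶜ := mem_compl.2 hj
  have hsum : ∑ x ∈ (A₁ ∪ A₂)ᶜ, #(N x) = #(A₁ ∪ A₂)ᶜ + 1 := by
    rw [sum_congr rfl fun x hx => hcard x (mem_compl.1 hx), sum_ite, filter_eq', filter_ne',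
      if_pos hj', sum_const, sum_const, card_singleton, card_erase_of_mem hj']
    have := card_pos.2 ⟨j, hj'⟩
    simp only [smul_eq_mul]
    omega
  rw [isTree_iff_connected_and_card]
  refine ⟨connected_attachOutside h₁.connected h₂.connected hindep hN (fun x hx => ?_) hj ha₁ ha₂
    hja₁ hja₂, ?_⟩
  · refine card_pos.1 ?_
    rw [hcard x hx]
    split_ifs <;> norm_num
  · rw [card_edgeSet_attachOutside hindep hN, card_filter_edgeFinset_subset_union h12 hno, hsum,
      Nat.card_eq_fintype_card, ← card_add_card_compl (A₁ ∪ A₂), card_union_of_disjoint h12,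
      ← h₁.card_filter_edgeFinset_subset_add_one, ← h₂.card_filter_edgeFinset_subset_add_one]
    ring

theorem odd_ncard_cotreeCompEdges_sdiff_attachOutside_iff
    [DecidableEq (G \ G.attachOutside A N).ConnectedComponent]
    (hindep : ∀ u ∉ A, ∀ v ∉ A, ¬G.Adj u v) (hN : ∀ x ∉ A, ∀ y ∈ N x, G.Adj x y) {j : V}
    (hj : j ∉ A) (hodd : ∀ x ∉ A, Odd (G.degree x - #(N x)) ↔ x = j)
    (c : (G \ G.attachOutside A N).ConnectedComponent) :
    Odd (cotreeCompEdges (G \ G.attachOutside A N) c).ncard ↔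
      (G \ G.attachOutside A N).connectedComponentMk j = c := by
  refine odd_ncard_cotreeCompEdges_iff (H := G \ G.attachOutside A N) (S := Aᶜ)
    (fun u hu v hv h => hindep u (mem_compl.1 hu) v (mem_compl.1 hv) h.1)
    (fun u v h => (notMem_or_notMem_of_sdiff_attachOutside_adj h).imp mem_compl.2 mem_compl.2)
    (mem_compl.2 hj) (fun x hx => ?_) c
  rw [mem_compl] at hx
  rw [degree_sdiff_attachOutside_of_notMem hindep (hN x hx) hx]
  exact hodd x hx

end AttachOutside

end SimpleGraph

/-- If a connected cubic graph has a vertex partition `{A, J}` with `A` inducing a forest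
with exactly two tree components and `J` independent, then `G` has a spanning tree whose
cotree has exactly one odd component. -/
theorem stmt8 {V : Type*} [Fintype V] [DecidableEq V] (G : SimpleGraph V)
    [DecidableRel G.Adj] (hconn : G.Connected) (hcubic : ∀ v, G.degree v = 3)
    (A J : Finset V) (hdisj : Disjoint A J) (hcover : A ∪ J = Finset.univ)
    (hforest : ∃ A₁ A₂ : Finset V, Disjoint A₁ A₂ ∧ A₁ ∪ A₂ = A ∧
      A₁.Nonempty ∧ A₂.Nonempty ∧
      (G.induce (↑A₁ : Set V)).IsTree ∧ (G.induce (↑A₂ : Set V)).IsTree ∧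
      ∀ u ∈ A₁, ∀ v ∈ A₂, ¬ G.Adj u v)
    (hind : ∀ u ∈ J, ∀ v ∈ J, ¬ G.Adj u v) :
    ∃ T : SimpleGraph V, T ≤ G ∧ T.IsTree ∧
      ∃ c : (G \ T).ConnectedComponent,
        Odd ((cotreeCompEdges (G \ T) c).ncard) ∧
        ∀ c' : (G \ T).ConnectedComponent,
          Odd ((cotreeCompEdges (G \ T) c').ncard) → c' = c := by
  classical
  obtain ⟨A₁, A₂, h12, rfl, hA₁, hA₂, hT₁, hT₂, hno⟩ := hforest
  obtain rfl : J = (A₁ ∪ A₂)ᶜ :=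
    eq_compl_iff_isCompl.2 ⟨hdisj.symm, by rw [codisjoint_iff, sup_eq_union, union_comm, hcover,
      top_eq_univ]⟩
  simp only [mem_compl] at hind
  obtain ⟨j₀, hj₀, a₁, ha₁, hja₁, a₂, ha₂, hja₂⟩ :=
    hconn.exists_adj_adj_of_notMem hA₁ hA₂ h12 hno hind
  have ha₁₂ : a₁ ≠ a₂ := by
    rintro rfl
    exact Finset.disjoint_left.1 h12 ha₁ ha₂
  obtain ⟨N, hN, hNa₁, hNa₂, hcard⟩ := exists_finset_adj_card_eq_ite
    (fun v => (G.degree_pos_iff_exists_adj v).1 (by rw [hcubic]; norm_num)) hja₁ hja₂ ha₁₂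
  have hcomp := odd_ncard_cotreeCompEdges_sdiff_attachOutside_iff hind (fun v _ => hN v) hj₀
    fun v _ => by by_cases hv : v = j₀ <;> simp [hcubic, hcard, hv]
  refine ⟨_, attachOutside_le, ?_, _, (hcomp _).2 rfl, fun c h => ((hcomp c).1 h).symm⟩
  exact isTree_attachOutside hT₁ hT₂ h12 hno hind (fun v _ => hN v) hj₀ ha₁ ha₂ hNa₁ hNa₂
    fun v _ => hcard v
end

section
/- In a cubic graph, every minimum cycle-separating edge cut is a matching (i.e., no two edges of the cut share a vertex). -/
open SimpleGraph Finset

/-!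
Suppose two edges `v₀u₀`, `v₀w₀` of a minimum cycle-separating cut `B` share the vertex `v₀`, and
let `v₀x` be the third edge at `v₀`. By minimality, returning any single edge of `B` reconnects
the two cyclic components `u` and `v`, so every edge of `B` has one end on each side; hence `v₀`
lies on one side, say with `u`, and `u₀, w₀` on the other. In `G - B` the vertex `v₀` has at most
the neighbour `x`, so it lies on no cycle, and swapping `v₀u₀, v₀w₀` for `v₀x` merely moves `v₀` to
the other side: `B - v₀u₀ - v₀w₀ + v₀x` is again cycle-separating, and it is smaller than `B`.
-/

/-- An edge set `B` is cycle-separating: after deleting `B`, there are two vertices in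
different components whose components both carry a cycle. -/
def CycleSeparating {V : Type*} (G : SimpleGraph V) (B : Set (Sym2 V)) : Prop :=
  ∃ (u v : V) (c₁ : (G.deleteEdges B).Walk u u) (c₂ : (G.deleteEdges B).Walk v v),
    c₁.IsCycle ∧ c₂.IsCycle ∧ ¬ (G.deleteEdges B).Reachable u v

namespace SimpleGraph

variable {V : Type*} {G H : SimpleGraph V}

theorem Walk.IsCycle.notMem_support_of_forall_adj_eq {u w x : V} {c : H.Walk u u}
    (hc : c.IsCycle) (hw : ∀ z, H.Adj w z → z = x) : w ∉ c.support := by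
  classical
  intro hwc
  have hc' := hc.rotate hwc
  exact hc'.snd_ne_penultimate <|
    (hw _ ((c.rotate w hwc).adj_snd hc'.not_nil)).trans
      (hw _ ((c.rotate w hwc).adj_penultimate hc'.not_nil).symm).symm

theorem Reachable.elim_sup_edge {a b u v : V} (h : (H ⊔ edge a b).Reachable u v) :
    H.Reachable u v ∨ (H.Reachable u a ∧ H.Reachable b v) ∨
      (H.Reachable u b ∧ H.Reachable a v) := by
  obtain ⟨p⟩ := h
  induction p with
  | nil => exact .inl .rfl
  | @cons x y _ hxy _ ih =>
    rcases (sup_adj _ _ _ _).mp hxy with hxy | hxy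
    · have hr := hxy.reachable
      rcases ih with h | ⟨h₁, h₂⟩ | ⟨h₁, h₂⟩
      · exact .inl (hr.trans h)
      · exact .inr (.inl ⟨hr.trans h₁, h₂⟩)
      · exact .inr (.inr ⟨hr.trans h₁, h₂⟩)
    · obtain ⟨⟨rfl, rfl⟩ | ⟨rfl, rfl⟩, -⟩ := (edge_adj _ _ _ _).mp hxy
      · rcases ih with h | ⟨-, h⟩ | ⟨-, h⟩
        · exact .inr (.inl ⟨.rfl, h⟩)
        · exact .inr (.inl ⟨.rfl, h⟩)
        · exact .inl h
      · rcases ih with h | ⟨-, h⟩ | ⟨-, h⟩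
        · exact .inr (.inr ⟨.rfl, h⟩)
        · exact .inl h
        · exact .inr (.inr ⟨.rfl, h⟩)

theorem deleteEdges_sdiff_singleton_le (B : Set (Sym2 V)) (a b : V) :
    G.deleteEdges (B \ {s(a, b)}) ≤ G.deleteEdges B ⊔ edge a b := by
  intro x y h
  simp only [deleteEdges_adj, sup_adj, edge_adj, Set.mem_sdiff, Set.mem_singleton_iff] at h ⊢
  by_cases hB : s(x, y) ∈ B
  · have hxy : s(x, y) = s(a, b) := by_contra fun hne => h.2 ⟨hB, hne⟩
    exact .inr ⟨by simpa [Sym2.eq_iff] using hxy, h.1.ne⟩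
  · exact .inl ⟨h.1, hB⟩

theorem exists_adj_forall_adj_eq_or_eq_or_eq {v a b : V} [Fintype (G.neighborSet v)]
    (hdeg : G.degree v = 3) (ha : G.Adj v a) (hb : G.Adj v b) (hab : a ≠ b) :
    ∃ x, G.Adj v x ∧ ∀ z, G.Adj v z → z = a ∨ z = b ∨ z = x := by
  classical
  have hcard : (G.neighborFinset v \ {a, b}).card = 1 := by
    rw [card_sdiff_of_subset (by simp [insert_subset_iff, ha, hb]), card_pair hab,
      card_neighborFinset_eq_degree, hdeg]
  obtain ⟨x, hx⟩ := card_eq_one.mp hcard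
  have hmem : ∀ z, z ∈ G.neighborFinset v \ {a, b} ↔ z = x := by simp [hx]
  refine ⟨x, (G.mem_neighborFinset v x).mp (mem_sdiff.mp ((hmem x).mpr rfl)).1, fun z hz => ?_⟩
  by_cases hza : z = a
  · exact .inl hza
  by_cases hzb : z = b
  · exact .inr (.inl hzb)
  exact .inr (.inr ((hmem z).mp (by simp [hz, hza, hzb])))

theorem reachable_or_reachable_of_not_cycleSeparating_sdiff {B : Set (Sym2 V)} {u v p q : V}
    {c₁ : (G.deleteEdges B).Walk u u} {c₂ : (G.deleteEdges B).Walk v v}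
    (hc₁ : c₁.IsCycle) (hc₂ : c₂.IsCycle) (huv : ¬ (G.deleteEdges B).Reachable u v)
    (hB : ¬ CycleSeparating G (B \ {s(p, q)})) :
    (G.deleteEdges B).Reachable u p ∧ (G.deleteEdges B).Reachable q v ∨
      (G.deleteEdges B).Reachable u q ∧ (G.deleteEdges B).Reachable p v := by
  have hle : G.deleteEdges B ≤ G.deleteEdges (B \ {s(p, q)}) :=
    deleteEdges_anti Set.sdiff_subset
  have hr : (G.deleteEdges (B \ {s(p, q)})).Reachable u v := by
    by_contra hr
    exact hB ⟨u, v, c₁.mapLe hle, c₂.mapLe hle, hc₁.mapLe hle, hc₂.mapLe hle, hr⟩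
  exact ((hr.mono (deleteEdges_sdiff_singleton_le B p q)).elim_sup_edge).resolve_left huv

theorem not_reachable_deleteEdges_insert_sdiff_pair {B : Set (Sym2 V)} {u v v₀ u₀ w₀ x : V}
    (hx : ∀ z, (G.deleteEdges B).Adj v₀ z → z = x) (huv : ¬ (G.deleteEdges B).Reachable u v)
    (huv₀ : u ≠ v₀) (hu₀ : (G.deleteEdges B).Reachable u₀ v)
    (hw₀ : (G.deleteEdges B).Reachable w₀ v) :
    ¬ (G.deleteEdges (insert s(v₀, x) (B \ {s(v₀, u₀), s(v₀, w₀)}))).Reachable u v := by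
  -- the component of `u` in `G - B`, without `v₀`, has no boundary edge in the new graph
  rintro ⟨p⟩
  obtain ⟨⟨⟨a, b⟩, hab⟩, -, ⟨hua, hav₀⟩, hb⟩ :=
    p.exists_boundary_dart {z | (G.deleteEdges B).Reachable u z ∧ z ≠ v₀}
      ⟨.rfl, huv₀⟩ (fun h => huv h.1)
  simp only [Set.mem_ofPred_eq, not_and, not_not] at hb
  rw [deleteEdges_adj] at hab
  by_cases habB : s(a, b) ∈ B
  · have : s(a, b) = s(v₀, u₀) ∨ s(a, b) = s(v₀, w₀) := by
      by_contra h
      exact hab.2 (Set.mem_insert_of_mem _ ⟨habB, by simpa [not_or] using h⟩)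
    rcases this with h | h <;> rcases Sym2.eq_iff.mp h with ⟨rfl, -⟩ | ⟨rfl, -⟩
    all_goals first | exact hav₀ rfl | exact huv (hua.trans ‹_›)
  · have hHab : (G.deleteEdges B).Adj a b := deleteEdges_adj.mpr ⟨hab.1, habB⟩
    obtain rfl := hb (hua.trans hHab.reachable)
    obtain rfl := hx a hHab.symm
    exact hab.2 (Set.mem_insert_iff.mpr (.inl Sym2.eq_swap))

theorem cycleSeparating_insert_sdiff_pair {B : Set (Sym2 V)} {u v v₀ u₀ w₀ x : V}
    (hnbr : ∀ z, G.Adj v₀ z → z = u₀ ∨ z = w₀ ∨ z = x)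
    (he : s(v₀, u₀) ∈ B) (hf : s(v₀, w₀) ∈ B)
    {c₁ : (G.deleteEdges B).Walk u u} {c₂ : (G.deleteEdges B).Walk v v}
    (hc₁ : c₁.IsCycle) (hc₂ : c₂.IsCycle) (huv : ¬ (G.deleteEdges B).Reachable u v)
    (hv₀ : (G.deleteEdges B).Reachable u v₀)
    (hu₀ : (G.deleteEdges B).Reachable u₀ v) (hw₀ : (G.deleteEdges B).Reachable w₀ v) :
    CycleSeparating G (insert s(v₀, x) (B \ {s(v₀, u₀), s(v₀, w₀)})) := by
  classical
  have hx : ∀ z, (G.deleteEdges B).Adj v₀ z → z = x := by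
    intro z hz
    rw [deleteEdges_adj] at hz
    rcases hnbr z hz.1 with rfl | rfl | rfl
    · exact absurd he hz.2
    · exact absurd hf hz.2
    · rfl
  have hsurvive : ∀ {w} (c : (G.deleteEdges B).Walk w w), v₀ ∉ c.support →
      ∀ ε ∈ c.edges,
        ε ∈ (G.deleteEdges (insert s(v₀, x) (B \ {s(v₀, u₀), s(v₀, w₀)}))).edgeSet := by
    intro w c hc ε hε
    have h := c.edges_subset_edgeSet hε
    rw [edgeSet_deleteEdges] at h ⊢
    refine ⟨h.1, fun hB' => ?_⟩
    rcases Set.mem_insert_iff.mp hB' with rfl | hB'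
    · exact hc (c.fst_mem_support_of_mem_edges hε)
    · exact h.2 hB'.1
  have hv₀c₁ : v₀ ∉ c₁.support := hc₁.notMem_support_of_forall_adj_eq hx
  have hv₀c₂ : v₀ ∉ c₂.support := fun h =>
    huv (hv₀.trans (c₂.takeUntil v₀ h).reachable.symm)
  exact ⟨u, v, c₁.transfer _ (hsurvive c₁ hv₀c₁), c₂.transfer _ (hsurvive c₂ hv₀c₂),
    hc₁.transfer _, hc₂.transfer _, not_reachable_deleteEdges_insert_sdiff_pair hx huv
      (fun h => hv₀c₁ (h ▸ c₁.start_mem_support)) hu₀ hw₀⟩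

end SimpleGraph

theorem Finset.card_insert_sdiff_pair_lt {α : Type*} [DecidableEq α] {s : Finset α} {a b : α}
    (c : α) (ha : a ∈ s) (hb : b ∈ s) (hab : a ≠ b) : (insert c (s \ {a, b})).card < s.card := by
  have hsub : {a, b} ⊆ s := insert_subset_iff.mpr ⟨ha, singleton_subset_iff.mpr hb⟩
  have h2 : 2 ≤ s.card := card_pair hab ▸ card_le_card hsub
  have := card_insert_le c (s \ {a, b})
  rw [card_sdiff_of_subset hsub, card_pair hab] at this
  omega

theorem stmt11_general {V : Type*} [Fintype V] [DecidableEq V] (G : SimpleGraph V)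
    [DecidableRel G.Adj] (hcubic : ∀ v, G.degree v = 3)
    (B : Finset (Sym2 V)) (hBE : B ⊆ G.edgeFinset)
    (hB : CycleSeparating G (↑B : Set (Sym2 V)))
    (hmin : ∀ B' : Finset (Sym2 V), B' ⊆ G.edgeFinset →
      CycleSeparating G (↑B' : Set (Sym2 V)) → B.card ≤ B'.card) :
    ∀ e ∈ B, ∀ f ∈ B, e ≠ f → ∀ v : V, ¬ (v ∈ e ∧ v ∈ f) := by
  rintro e he f hf hef v₀ ⟨hve, hvf⟩
  obtain ⟨u₀, rfl⟩ := Sym2.mem_iff_exists.mp hve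
  obtain ⟨w₀, rfl⟩ := Sym2.mem_iff_exists.mp hvf
  have hadj : ∀ {a}, s(v₀, a) ∈ B → G.Adj v₀ a := fun h => G.mem_edgeFinset.mp (hBE h)
  obtain ⟨x, hx, hnbr⟩ := exists_adj_forall_adj_eq_or_eq_or_eq (hcubic v₀) (hadj he) (hadj hf)
    (fun h => hef (h ▸ rfl))
  have hminimal : ∀ {p q : V}, s(p, q) ∈ B → ¬ CycleSeparating G (↑B \ {s(p, q)}) :=
    fun h hcs => (card_erase_lt_of_mem h).not_ge
      (hmin _ ((erase_subset _ _).trans hBE) (by rwa [coe_erase]))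
  obtain ⟨u, v, c₁, c₂, hc₁, hc₂, huv⟩ := hB
  set B' := insert s(v₀, x) (B \ {s(v₀, u₀), s(v₀, w₀)})
  have hB'E : B' ⊆ G.edgeFinset :=
    insert_subset_iff.mpr ⟨G.mem_edgeFinset.mpr hx, sdiff_subset.trans hBE⟩
  have hB' : CycleSeparating G ↑B' := by
    simp only [B', coe_insert, coe_sdiff, coe_singleton]
    rcases reachable_or_reachable_of_not_cycleSeparating_sdiff hc₁ hc₂ huv (hminimal he)
      with ⟨h₁, h₂⟩ | ⟨h₁, h₂⟩ <;>
    rcases reachable_or_reachable_of_not_cycleSeparating_sdiff hc₁ hc₂ huv (hminimal hf)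
      with ⟨h₃, h₄⟩ | ⟨h₃, h₄⟩
    · exact cycleSeparating_insert_sdiff_pair hnbr he hf hc₁ hc₂ huv h₁ h₂ h₄
    · exact absurd (h₁.trans h₄) huv
    · exact absurd (h₃.trans h₂) huv
    · exact cycleSeparating_insert_sdiff_pair hnbr he hf hc₂ hc₁ (fun h => huv h.symm)
        h₂.symm h₁.symm h₃.symm
  exact (card_insert_sdiff_pair_lt _ he hf hef).not_ge (hmin B' hB'E hB')

/-- In a connected cubic graph, every minimum cycle-separating edge cut is a matching. -/
theorem stmt11 {V : Type*} [Fintype V] [DecidableEq V] (G : SimpleGraph V)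
    [DecidableRel G.Adj] (hconn : G.Connected) (hcubic : ∀ v, G.degree v = 3)
    (B : Finset (Sym2 V)) (hBE : B ⊆ G.edgeFinset)
    (hB : CycleSeparating G (↑B : Set (Sym2 V)))
    (hmin : ∀ B' : Finset (Sym2 V), B' ⊆ G.edgeFinset →
      CycleSeparating G (↑B' : Set (Sym2 V)) → B.card ≤ B'.card) :
    ∀ e ∈ B, ∀ f ∈ B, e ≠ f → ∀ v : V, ¬ (v ∈ e ∧ v ∈ f) :=
  stmt11_general G hcubic B hBE hB hmin
end

section
/- Let G be a connected cubic graph obtained from a 2-edge-connected cubic graph H on n vertices by inflating every vertex of H to a triangle and replacing each edge of H (not on a vertex-triangle) with a string of diamonds of arbitrary length. Let X be the set of edges of G not lying on any triangle. Then the number of cyclically odd components of G − X is n, and ec(G − X) − |X| = −3n/2, where ec counts components with even Betti number. -/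
open SimpleGraph Finset

/-- Data witnessing that the cubic graph `G` is obtained from the cubic graph `H` by
inflating every vertex of `H` to a triangle and replacing each edge `e` of `H` by a
string of `k e` diamonds: `tri u` is the vertex-triangle at `u`, `dia e i`
(for `i < k e`) are the diamonds of the string at `e`, and `cross e` are the
`k e + 1` connecting edges of the string at `e`. -/
structure DiamondInflation {VH VG : Type*} [Fintype VH] [Fintype VG]
    [DecidableEq VH] [DecidableEq VG]
    (H : SimpleGraph VH) (G : SimpleGraph VG) (k : Sym2 VH → ℕ) where
  tri : VH → Finset VG
  dia : Sym2 VH → ℕ → Finset VG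
  cross : Sym2 VH → Finset (Sym2 VG)
  tri_card : ∀ u, (tri u).card = 3
  tri_adj : ∀ u, ∀ x ∈ tri u, ∀ y ∈ tri u, x ≠ y → G.Adj x y
  dia_card : ∀ e ∈ H.edgeSet, ∀ i < k e, (dia e i).card = 4
  dia_edges : ∀ e ∈ H.edgeSet, ∀ i < k e,
    {f | f ∈ G.edgeSet ∧ ∀ v ∈ f, v ∈ (↑(dia e i) : Set VG)}.ncard = 5
  pieces_cover : ∀ x : VG,
    (∃ u, x ∈ tri u) ∨ (∃ e ∈ H.edgeSet, ∃ i < k e, x ∈ dia e i)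
  tri_disj : ∀ u u', u ≠ u' → Disjoint (tri u) (tri u')
  dia_disj : ∀ e ∈ H.edgeSet, ∀ e' ∈ H.edgeSet, ∀ i < k e, ∀ j < k e',
    (e ≠ e' ∨ i ≠ j) → Disjoint (dia e i) (dia e' j)
  tri_dia_disj : ∀ u, ∀ e ∈ H.edgeSet, ∀ i < k e, Disjoint (tri u) (dia e i)
  cross_card : ∀ e ∈ H.edgeSet, (cross e).card = k e + 1
  cross_sub : ∀ e ∈ H.edgeSet, (↑(cross e) : Set (Sym2 VG)) ⊆ G.edgeSet
  cross_ends : ∀ e ∈ H.edgeSet, ∀ f ∈ cross e, ∀ v ∈ f,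
    (∃ u ∈ e, v ∈ tri u) ∨ (∃ i < k e, v ∈ dia e i)
  edge_classify : ∀ f ∈ G.edgeSet,
    (∃ u, ∀ v ∈ f, v ∈ tri u) ∨
    (∃ e ∈ H.edgeSet, ∃ i < k e, ∀ v ∈ f, v ∈ dia e i) ∨
    (∃! e, e ∈ H.edgeSet ∧ f ∈ cross e)

/-- The Betti number (`|E| − |V| + 1`) of the connected component `c` of `Gr`. -/
noncomputable def compBetti {V : Type*} (Gr : SimpleGraph V)
    (c : Gr.ConnectedComponent) : ℤ :=
  ({e | e ∈ Gr.edgeSet ∧ ∀ v ∈ e, Gr.connectedComponentMk v = c}.ncard : ℤ)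
    - c.supp.ncard + 1

/-!
In `G − X` exactly the edges lying on triangles survive. Every vertex of `G` has at least two
neighbours inside its own piece (vertex-triangle or diamond), hence, `G` being cubic, at most one
outside it; so no triangle meets two pieces, and the components of `G − X` are exactly the pieces:
triangles (3 vertices, 3 edges, `β = 1`) and diamonds (4 vertices, 5 edges, `β = 2`). The odd
components are therefore the `n` vertex-triangles, and counting the edges of the cubic graph `G`
gives `2|X| = 3|V(G)| − 2|E(G − X)| = ∑_c (3|V_c| − 2|E_c|) = 3n + 2·ec(G − X)`.
-/

lemma finsum_eq_mul_ncard_add_mul_ncard {α : Type*} [Finite α] (p : α → Prop) {f : α → ℕ}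
    {m n : ℕ} (hp : ∀ x, p x → f x = m) (hnp : ∀ x, ¬ p x → f x = n) :
    ∑ᶠ x, f x = m * {x | p x}.ncard + n * {x | ¬ p x}.ncard := by
  classical
  cases nonempty_fintype α
  rw [finsum_eq_sum_of_fintype, ← Finset.sum_filter_add_sum_filter_not Finset.univ p,
    Finset.sum_const_nat fun x hx ↦ hp x (Finset.mem_filter.mp hx).2,
    Finset.sum_const_nat fun x hx ↦ hnp x (Finset.mem_filter.mp hx).2,
    ← Set.ncard_coe_finset, ← Set.ncard_coe_finset, Finset.coe_filter_univ,
    Finset.coe_filter_univ, mul_comm, mul_comm n]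

namespace SimpleGraph

variable {V : Type*} {G : SimpleGraph V}

variable (G) in
def edgesWithin (s : Set V) : Set (Sym2 V) := {f | f ∈ G.edgeSet ∧ ∀ v ∈ f, v ∈ s}

lemma compBetti_eq (c : G.ConnectedComponent) :
    compBetti G c = ((G.edgesWithin c.supp).ncard : ℤ) - c.supp.ncard + 1 := rfl

lemma edgesWithin_subset_image_offDiag [DecidableEq V] (S : Finset V) :
    G.edgesWithin S ⊆ ↑(S.offDiag.image Sym2.mk.uncurry) := by
  rintro f ⟨hf, hfS⟩
  induction f with
  | _ x y =>
    exact mem_image.mpr ⟨(x, y), mem_offDiag.mpr ⟨hfS x (Sym2.mem_mk_left x y),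
      hfS y (Sym2.mem_mk_right x y), ((mem_edgeSet G).mp hf).ne⟩, rfl⟩

lemma IsNClique.ncard_edgesWithin [DecidableEq V] {n : ℕ} {S : Finset V} (hS : G.IsNClique n S) :
    (G.edgesWithin S).ncard = n.choose 2 := by
  have hall : ↑(S.offDiag.image Sym2.mk.uncurry) ⊆ G.edgesWithin S := by
    intro f hf
    obtain ⟨⟨x, y⟩, hxy, rfl⟩ := mem_image.mp hf
    obtain ⟨hx, hy, hne⟩ := mem_offDiag.mp hxy
    refine ⟨hS.1 hx hy hne, fun v hv ↦ ?_⟩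
    rcases Sym2.mem_iff.mp hv with rfl | rfl <;> assumption
  rw [(edgesWithin_subset_image_offDiag S).antisymm hall, Set.ncard_coe_finset,
    Sym2.card_image_offDiag, hS.card_eq]

lemma nat_card_eq_finsum_ncard_supp [Finite V] :
    Nat.card V = ∑ᶠ c : G.ConnectedComponent, c.supp.ncard := by
  rw [← Set.ncard_univ, ← G.iUnion_connectedComponentSupp,
    Set.ncard_iUnion_of_finite (fun _ ↦ Set.toFinite _) G.pairwise_disjoint_supp_connectedComponent]

lemma ncard_edgeSet_eq_finsum_ncard_edgesWithin_supp [Finite V] :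
    G.edgeSet.ncard = ∑ᶠ c : G.ConnectedComponent, (G.edgesWithin c.supp).ncard := by
  have hunion : ⋃ c : G.ConnectedComponent, G.edgesWithin c.supp = G.edgeSet := by
    refine Set.Subset.antisymm (Set.iUnion_subset fun c e he ↦ he.1) fun e he ↦ ?_
    induction e with
    | _ a b =>
      refine Set.mem_iUnion.mpr ⟨G.connectedComponentMk a, he, fun v hv ↦ ?_⟩
      rcases Sym2.mem_iff.mp hv with rfl | rfl
      exacts [rfl, (ConnectedComponent.connectedComponentMk_eq_of_adj he).symm]
  have hdisj : Pairwise (Function.onFun Disjoint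
      fun c : G.ConnectedComponent ↦ G.edgesWithin c.supp) := by
    intro c c' hcc'
    refine Set.disjoint_left.mpr fun e he he' ↦ hcc' ?_
    have hv := Sym2.out_fst_mem e
    exact (he.2 _ hv).symm.trans (he'.2 _ hv)
  rw [← hunion, Set.ncard_iUnion_of_finite (fun _ ↦ Set.toFinite _) hdisj]

lemma two_mul_ncard_add_two_mul_finsum_ncard_edgesWithin_of_degree_eq_three [Fintype V]
    [DecidableRel G.Adj] (hG : ∀ v, G.degree v = 3) {X : Set (Sym2 V)} (hX : X ⊆ G.edgeSet) :
    2 * X.ncard + 2 * ∑ᶠ c : (G.deleteEdges X).ConnectedComponent,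
        ((G.deleteEdges X).edgesWithin c.supp).ncard =
      3 * ∑ᶠ c : (G.deleteEdges X).ConnectedComponent, c.supp.ncard := by
  rw [← ncard_edgeSet_eq_finsum_ncard_edgesWithin_supp, ← nat_card_eq_finsum_ncard_supp,
    Nat.card_eq_fintype_card, edgeSet_deleteEdges, ← mul_add, add_comm,
    Set.ncard_sdiff_add_ncard_of_subset hX, ← coe_edgeFinset, Set.ncard_coe_finset,
    ← sum_degrees_eq_twice_card_edges, Finset.sum_congr rfl fun v _ ↦ hG v, Finset.sum_const,
    Finset.card_univ, smul_eq_mul, mul_comm]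

variable (G) in
def edgesOffTriangles : Set (Sym2 V) :=
  {f | f ∈ G.edgeSet ∧ ¬ ∃ x y z : V, G.Adj x y ∧ G.Adj y z ∧ G.Adj x z ∧
    f ∈ ({s(x, y), s(y, z), s(x, z)} : Set (Sym2 V))}

lemma mk_mem_edgesOffTriangles_iff {a b : V} :
    s(a, b) ∈ G.edgesOffTriangles ↔ G.Adj a b ∧ ¬ ∃ z, G.Adj a z ∧ G.Adj b z := by
  refine and_congr_right fun hab ↦ not_congr ⟨?_, fun ⟨z, haz, hbz⟩ ↦
    ⟨a, b, z, hab, hbz, haz, Set.mem_insert _ _⟩⟩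
  rintro ⟨x, y, z, hxy, hyz, hxz, hf⟩
  simp only [Set.mem_insert_iff, Set.mem_singleton_iff, Sym2.eq_iff] at hf
  rcases hf with (⟨rfl, rfl⟩ | ⟨rfl, rfl⟩) | (⟨rfl, rfl⟩ | ⟨rfl, rfl⟩) | (⟨rfl, rfl⟩ | ⟨rfl, rfl⟩)
  exacts [⟨z, hxz, hyz⟩, ⟨z, hyz, hxz⟩, ⟨x, hxy.symm, hxz.symm⟩, ⟨x, hxz.symm, hxy.symm⟩,
    ⟨y, hxy, hyz.symm⟩, ⟨y, hyz.symm, hxy⟩]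

lemma deleteEdges_edgesOffTriangles_adj {a b : V} :
    (G.deleteEdges G.edgesOffTriangles).Adj a b ↔ G.Adj a b ∧ ∃ z, G.Adj a z ∧ G.Adj b z := by
  rw [deleteEdges_adj, mk_mem_edgesOffTriangles_iff, not_and, not_not]
  exact ⟨fun ⟨h, h'⟩ ↦ ⟨h, h' h⟩, fun ⟨h, h'⟩ ↦ ⟨h, fun _ ↦ h'⟩⟩

section Partition

variable {r : V → V → Prop}

/-- If every vertex has at most one neighbour outside its class, a triangle cannot meet two
classes: the third vertex would be the outside neighbour of both others. -/
lemma rel_of_adj_of_common_adj (hr : Equivalence r)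
    (hout : ∀ a y z, G.Adj a y → G.Adj a z → ¬ r a y → ¬ r a z → y = z)
    {a b z : V} (hab : G.Adj a b) (haz : G.Adj a z) (hbz : G.Adj b z) : r a b := by
  by_contra h
  have haz' : r a z := by
    by_contra h'
    exact hbz.ne (hout a b z hab haz h h')
  have hbz' : r b z := by
    by_contra h'
    exact haz.ne (hout b a z hab.symm hbz (fun h'' ↦ h (hr.symm h'')) h')
  exact h (hr.trans haz' (hr.symm hbz'))

variable (hr : Equivalence r)
  (hout : ∀ a y z, G.Adj a y → G.Adj a z → ¬ r a y → ¬ r a z → y = z)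
  (htri : ∀ a b, G.Adj a b → r a b → ∃ z, G.Adj a z ∧ G.Adj b z)
include hr hout htri

lemma deleteEdges_edgesOffTriangles_adj_iff_rel {a b : V} :
    (G.deleteEdges G.edgesOffTriangles).Adj a b ↔ G.Adj a b ∧ r a b := by
  rw [deleteEdges_edgesOffTriangles_adj]
  constructor
  · rintro ⟨hab, z, haz, hbz⟩
    exact ⟨hab, rel_of_adj_of_common_adj hr hout hab haz hbz⟩
  · rintro ⟨hab, h⟩
    exact ⟨hab, htri a b hab h⟩

variable (hdiam : ∀ a b, r a b → a ≠ b → G.Adj a b ∨ ∃ z, r a z ∧ G.Adj a z ∧ G.Adj z b)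
include hdiam

lemma deleteEdges_edgesOffTriangles_reachable_iff_rel {a b : V} :
    (G.deleteEdges G.edgesOffTriangles).Reachable a b ↔ r a b := by
  have hadj := fun {x y : V} ↦ deleteEdges_edgesOffTriangles_adj_iff_rel (a := x) (b := y)
    hr hout htri
  constructor
  · rw [reachable_iff_reflTransGen]
    intro h
    induction h with
    | refl => exact hr.refl a
    | tail _ hxy ih => exact hr.trans ih ((hadj.mp hxy).2)
  · intro h
    by_cases hab : a = b
    · exact hab ▸ Reachable.refl a
    rcases hdiam a b h hab with hab' | ⟨z, haz, haz', hzb⟩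
    · exact (hadj.mpr ⟨hab', h⟩).reachable
    · exact (hadj.mpr ⟨haz', haz⟩).reachable.trans
        (hadj.mpr ⟨hzb, hr.trans (hr.symm haz) h⟩).reachable

lemma supp_deleteEdges_edgesOffTriangles_connectedComponentMk (a : V) :
    ((G.deleteEdges G.edgesOffTriangles).connectedComponentMk a).supp = {b | r a b} := by
  ext b
  rw [ConnectedComponent.mem_supp_iff, ConnectedComponent.eq,
    deleteEdges_edgesOffTriangles_reachable_iff_rel hr hout htri hdiam]
  exact ⟨hr.symm, hr.symm⟩

lemma edgesWithin_supp_deleteEdges_edgesOffTriangles_connectedComponentMk (a : V) :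
    (G.deleteEdges G.edgesOffTriangles).edgesWithin
        ((G.deleteEdges G.edgesOffTriangles).connectedComponentMk a).supp =
      G.edgesWithin {b | r a b} := by
  ext f
  induction f with
  | _ x y =>
    simp only [edgesWithin, Set.mem_ofPred_eq, mem_edgeSet,
      supp_deleteEdges_edgesOffTriangles_connectedComponentMk hr hout htri hdiam,
      deleteEdges_edgesOffTriangles_adj_iff_rel hr hout htri, Sym2.mem_iff, forall_eq_or_imp,
      forall_eq]
    exact ⟨fun ⟨⟨h, _⟩, h'⟩ ↦ ⟨h, h'⟩, fun ⟨h, hx, hy⟩ ↦ ⟨⟨h, hr.trans (hr.symm hx) hy⟩, hx, hy⟩⟩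

end Partition

section

variable [DecidableEq V]

lemma eq_of_adj_of_notMem_of_degree_eq_three [DecidableRel G.Adj] {S : Finset V} {a y z : V}
    [Fintype (G.neighborSet a)] (hdeg : G.degree a = 3) (hS : 2 ≤ #{b ∈ S | G.Adj a b})
    (hy : G.Adj a y) (hz : G.Adj a z) (hyS : y ∉ S) (hzS : z ∉ S) : y = z := by
  have hsplit := card_filter_add_card_filter_not (s := G.neighborFinset a) (· ∈ S)
  have hin : {b ∈ S | G.Adj a b} = {b ∈ G.neighborFinset a | b ∈ S} := by
    ext b
    simp only [mem_filter, mem_neighborFinset, and_comm]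
  rw [card_neighborFinset_eq_degree, hdeg, ← hin] at hsplit
  have hout : #{b ∈ G.neighborFinset a | b ∉ S} ≤ 1 := by omega
  exact card_le_one.mp hout y (by simp [hy, hyS]) z (by simp [hz, hzS])

lemma IsNClique.card_filter_adj [DecidableRel G.Adj] {n : ℕ} {S : Finset V}
    (hS : G.IsNClique n S) {a : V} (ha : a ∈ S) : #{b ∈ S | G.Adj a b} = n - 1 := by
  have hfilter : {b ∈ S | G.Adj a b} = S.erase a := by
    ext b
    simp only [mem_filter, mem_erase]
    exact ⟨fun ⟨hb, hab⟩ ↦ ⟨hab.ne.symm, hb⟩, fun ⟨hba, hb⟩ ↦ ⟨hb, hS.1 ha hb hba.symm⟩⟩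
  rw [hfilter, card_erase_of_mem ha, hS.card_eq]

lemma IsNClique.exists_common_adj {n : ℕ} {S : Finset V} (hS : G.IsNClique n S) (hn : 3 ≤ n)
    {a b : V} (ha : a ∈ S) (hb : b ∈ S) (hab : a ≠ b) : ∃ z ∈ S, G.Adj a z ∧ G.Adj b z := by
  obtain ⟨z, hz⟩ : ((S.erase a).erase b).Nonempty := by
    rw [← card_pos, card_erase_of_mem (mem_erase.mpr ⟨hab.symm, hb⟩), card_erase_of_mem ha,
      hS.card_eq]
    omega
  have hzS : z ∈ S := mem_of_mem_erase (mem_of_mem_erase hz)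
  exact ⟨z, hzS, hS.1 ha hzS (ne_of_mem_erase (mem_of_mem_erase hz)).symm,
    hS.1 hb hzS (ne_of_mem_erase hz).symm⟩

section Diamond

variable {S : Finset V} (hS : #S = 4)
  (hE : (G.edgesWithin S).ncard = 5)
include hS hE

/-- Four vertices spanning five edges miss exactly one of the six pairs. -/
lemma adj_or_adj_of_card_eq_four {a b c d : V} (ha : a ∈ S) (hb : b ∈ S) (hc : c ∈ S)
    (hd : d ∈ S) (hab : a ≠ b) (hcd : c ≠ d) (hne : s(a, b) ≠ s(c, d)) :
    G.Adj a b ∨ G.Adj c d := by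
  set P : Set (Sym2 V) := ↑(S.offDiag.image Sym2.mk.uncurry)
  have hEP := edgesWithin_subset_image_offDiag (G := G) S
  have hcard : (P \ G.edgesWithin S).ncard ≤ 1 := by
    rw [Set.ncard_sdiff hEP ((Set.toFinite P).subset hEP), hE, Set.ncard_coe_finset,
      Sym2.card_image_offDiag, hS]
    decide
  have hmem : ∀ {x y : V}, x ∈ S → y ∈ S → x ≠ y → ¬ G.Adj x y →
      s(x, y) ∈ P \ G.edgesWithin S := fun hx hy hxy hnxy ↦
    ⟨mem_image.mpr ⟨(_, _), mem_offDiag.mpr ⟨hx, hy, hxy⟩, rfl⟩, fun h ↦ hnxy h.1⟩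
  by_contra! h
  exact hne ((Set.ncard_le_one_iff ((Set.toFinite P).subset Set.sdiff_subset)).mp hcard
    (hmem ha hb hab h.1) (hmem hc hd hcd h.2))

lemma two_le_card_filter_adj_of_card_eq_four [DecidableRel G.Adj] {a : V} (ha : a ∈ S) :
    2 ≤ #{b ∈ S | G.Adj a b} := by
  have hnonadj : #{b ∈ S.erase a | ¬ G.Adj a b} ≤ 1 := card_le_one.mpr fun x hx y hy ↦ by
    simp only [mem_filter, mem_erase] at hx hy
    by_contra hxy
    refine (adj_or_adj_of_card_eq_four hS hE ha hx.1.2 ha hy.1.2 hx.1.1.symm hy.1.1.symm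
      (fun h ↦ hxy (Sym2.congr_right.mp h))).elim hx.2 hy.2
  have hsplit := card_filter_add_card_filter_not (s := S.erase a) (fun b ↦ G.Adj a b)
  rw [card_erase_of_mem ha, hS] at hsplit
  have hsub : #{b ∈ S.erase a | G.Adj a b} ≤ #{b ∈ S | G.Adj a b} :=
    card_le_card (filter_subset_filter _ (erase_subset a S))
  omega

lemma exists_common_adj_of_card_eq_four {a b : V} (ha : a ∈ S) (hb : b ∈ S)
    (hab : a ≠ b) : ∃ z ∈ S, G.Adj a z ∧ G.Adj b z := by
  obtain ⟨c, d, hcd, hrest⟩ : ∃ c d, c ≠ d ∧ (S.erase a).erase b = {c, d} := by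
    rw [← card_eq_two, card_erase_of_mem (mem_erase.mpr ⟨hab.symm, hb⟩), card_erase_of_mem ha,
      hS]
  have hmem : ∀ {x}, x ∈ (S.erase a).erase b → x ≠ b ∧ x ≠ a ∧ x ∈ S := fun hx ↦
    ⟨ne_of_mem_erase hx, ne_of_mem_erase (mem_of_mem_erase hx),
      mem_of_mem_erase (mem_of_mem_erase hx)⟩
  obtain ⟨hcb, hca, hc⟩ := hmem (hrest ▸ mem_insert_self c {d})
  obtain ⟨hdb, hda, hd⟩ := hmem (hrest ▸ mem_insert_of_mem (mem_singleton_self d))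
  -- otherwise `c` and `d` each have a non-neighbour in `{a, b}`: two distinct non-edges
  by_contra! h
  have hnonadj : ∀ w ∈ S, ∃ x, (x = a ∨ x = b) ∧ ¬ G.Adj x w := fun w hw ↦ by
    by_cases haw : G.Adj a w
    exacts [⟨b, Or.inr rfl, h w hw haw⟩, ⟨a, Or.inl rfl, haw⟩]
  obtain ⟨x, hx, hxc⟩ := hnonadj c hc
  obtain ⟨y, hy, hyd⟩ := hnonadj d hd
  refine (adj_or_adj_of_card_eq_four hS hE (by rcases hx with rfl | rfl <;> assumption) hc
    (by rcases hy with rfl | rfl <;> assumption) hd (by grind) (by grind) ?_).elim hxc hyd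
  rw [Ne, Sym2.eq_iff]
  grind

lemma adj_or_exists_adj_adj_of_card_eq_four {a b : V} (ha : a ∈ S) (hb : b ∈ S)
    (hab : a ≠ b) : G.Adj a b ∨ ∃ z ∈ S, G.Adj a z ∧ G.Adj z b := by
  by_cases h : G.Adj a b
  · exact Or.inl h
  obtain ⟨z, hz⟩ : ((S.erase a).erase b).Nonempty := by
    rw [← card_pos, card_erase_of_mem (mem_erase.mpr ⟨hab.symm, hb⟩), card_erase_of_mem ha, hS]
    decide
  have hzb := ne_of_mem_erase hz
  have hza := ne_of_mem_erase (mem_of_mem_erase hz)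
  have hzS := mem_of_mem_erase (mem_of_mem_erase hz)
  refine Or.inr ⟨z, hzS, ?_, ?_⟩
  · exact (adj_or_adj_of_card_eq_four hS hE ha hzS ha hb hza.symm hab
      (fun h' ↦ hzb (Sym2.congr_right.mp h'))).resolve_right h
  · exact (adj_or_adj_of_card_eq_four hS hE hzS hb ha hb hzb hab
      (fun h' ↦ hza (Sym2.congr_left.mp h'))).resolve_right h

end Diamond

end

end SimpleGraph

namespace DiamondInflation

variable {VH VG : Type*} [Fintype VH] [Fintype VG] [DecidableEq VH] [DecidableEq VG]
  {H : SimpleGraph VH} {G : SimpleGraph VG} {k : Sym2 VH → ℕ} (D : DiamondInflation H G k)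

def IsPiece (S : Finset VG) : Prop :=
  (∃ u, S = D.tri u) ∨ (∃ e ∈ H.edgeSet, ∃ i < k e, S = D.dia e i)

def SamePiece (x y : VG) : Prop := ∃ S, D.IsPiece S ∧ x ∈ S ∧ y ∈ S

lemma exists_isPiece_mem (x : VG) : ∃ S, D.IsPiece S ∧ x ∈ S := by
  rcases D.pieces_cover x with ⟨u, hu⟩ | ⟨e, he, i, hi, hx⟩
  exacts [⟨_, Or.inl ⟨u, rfl⟩, hu⟩, ⟨_, Or.inr ⟨e, he, i, hi, rfl⟩, hx⟩]

variable {D}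

lemma IsPiece.eq_of_mem {S S' : Finset VG} {x : VG} (hS : D.IsPiece S) (hS' : D.IsPiece S')
    (hx : x ∈ S) (hx' : x ∈ S') : S = S' := by
  by_contra hne
  refine Finset.disjoint_left.mp ?_ hx hx'
  rcases hS with ⟨u, rfl⟩ | ⟨e, he, i, hi, rfl⟩ <;>
    rcases hS' with ⟨u', rfl⟩ | ⟨e', he', i', hi', rfl⟩
  · exact D.tri_disj u u' fun h ↦ hne (h ▸ rfl)
  · exact D.tri_dia_disj u e' he' i' hi'
  · exact (D.tri_dia_disj u' e he i hi).symm
  · exact D.dia_disj e he e' he' i hi i' hi' (by grind)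

lemma IsPiece.samePiece_iff {S : Finset VG} {a : VG} (hS : D.IsPiece S) (ha : a ∈ S)
    {b : VG} : D.SamePiece a b ↔ b ∈ S :=
  ⟨fun ⟨_, hS', ha', hb⟩ ↦ hS'.eq_of_mem hS ha' ha ▸ hb, fun hb ↦ ⟨S, hS, ha, hb⟩⟩

lemma IsPiece.setOf_samePiece_eq {S : Finset VG} {a : VG} (hS : D.IsPiece S) (ha : a ∈ S) :
    {b | D.SamePiece a b} = S :=
  Set.ext fun _ ↦ hS.samePiece_iff ha

variable (D)

lemma samePiece_equivalence : Equivalence D.SamePiece where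
  refl x := let ⟨S, hS, hx⟩ := D.exists_isPiece_mem x; ⟨S, hS, hx, hx⟩
  symm := fun ⟨S, hS, hx, hy⟩ ↦ ⟨S, hS, hy, hx⟩
  trans := fun ⟨S, hS, hx, hy⟩ hyz ↦ ⟨S, hS, hx, (hS.samePiece_iff hy).mp hyz⟩

lemma isNClique_tri (u : VH) : G.IsNClique 3 (D.tri u) :=
  ⟨fun x hx y hy hxy ↦ D.tri_adj u x hx y hy hxy, D.tri_card u⟩

lemma tri_nonempty (u : VH) : (D.tri u).Nonempty :=
  card_pos.mp (by rw [D.tri_card]; decide)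

noncomputable def triComponent (u : VH) :
    (G.deleteEdges G.edgesOffTriangles).ConnectedComponent :=
  (G.deleteEdges G.edgesOffTriangles).connectedComponentMk (D.tri_nonempty u).choose

variable {D}

lemma IsPiece.two_le_card_filter_adj [DecidableRel G.Adj] {S : Finset VG} (hS : D.IsPiece S)
    {a : VG} (ha : a ∈ S) : 2 ≤ #{b ∈ S | G.Adj a b} := by
  rcases hS with ⟨u, rfl⟩ | ⟨e, he, i, hi, rfl⟩
  · exact ((D.isNClique_tri u).card_filter_adj ha).ge
  · exact two_le_card_filter_adj_of_card_eq_four (D.dia_card e he i hi) (D.dia_edges e he i hi) ha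

lemma IsPiece.exists_common_adj {S : Finset VG} (hS : D.IsPiece S) {a b : VG} (ha : a ∈ S)
    (hb : b ∈ S) (hab : a ≠ b) : ∃ z ∈ S, G.Adj a z ∧ G.Adj b z := by
  rcases hS with ⟨u, rfl⟩ | ⟨e, he, i, hi, rfl⟩
  · exact (D.isNClique_tri u).exists_common_adj le_rfl ha hb hab
  · exact exists_common_adj_of_card_eq_four (D.dia_card e he i hi) (D.dia_edges e he i hi)
      ha hb hab

lemma IsPiece.adj_or_exists_adj_adj {S : Finset VG} (hS : D.IsPiece S) {a b : VG} (ha : a ∈ S)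
    (hb : b ∈ S) (hab : a ≠ b) : G.Adj a b ∨ ∃ z ∈ S, G.Adj a z ∧ G.Adj z b := by
  rcases hS with ⟨u, rfl⟩ | ⟨e, he, i, hi, rfl⟩
  · exact Or.inl (D.tri_adj u a ha b hb hab)
  · exact adj_or_exists_adj_adj_of_card_eq_four (D.dia_card e he i hi) (D.dia_edges e he i hi)
      ha hb hab

lemma exists_common_adj_of_samePiece {a b : VG} (hab : G.Adj a b) (h : D.SamePiece a b) :
    ∃ z, G.Adj a z ∧ G.Adj b z :=
  let ⟨_, hS, ha, hb⟩ := h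
  let ⟨z, _, hz⟩ := hS.exists_common_adj ha hb hab.ne
  ⟨z, hz⟩

lemma adj_or_exists_adj_adj_of_samePiece {a b : VG} (h : D.SamePiece a b) (hab : a ≠ b) :
    G.Adj a b ∨ ∃ z, D.SamePiece a z ∧ G.Adj a z ∧ G.Adj z b := by
  obtain ⟨S, hS, ha, hb⟩ := h
  rcases hS.adj_or_exists_adj_adj ha hb hab with h | ⟨z, hz, haz, hzb⟩
  exacts [Or.inl h, Or.inr ⟨z, ⟨S, hS, ha, hz⟩, haz, hzb⟩]

section Cubic

variable [DecidableRel G.Adj] (hG : ∀ v, G.degree v = 3)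
include hG

lemma eq_of_adj_of_not_samePiece {a y z : VG} (hy : G.Adj a y) (hz : G.Adj a z)
    (hy' : ¬ D.SamePiece a y) (hz' : ¬ D.SamePiece a z) : y = z := by
  obtain ⟨S, hS, ha⟩ := D.exists_isPiece_mem a
  rw [hS.samePiece_iff ha] at hy' hz'
  exact eq_of_adj_of_notMem_of_degree_eq_three (hG a) (hS.two_le_card_filter_adj ha) hy hz hy' hz'

lemma supp_connectedComponentMk {S : Finset VG} (hS : D.IsPiece S) {a : VG} (ha : a ∈ S) :
    ((G.deleteEdges G.edgesOffTriangles).connectedComponentMk a).supp = S := by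
  rw [supp_deleteEdges_edgesOffTriangles_connectedComponentMk D.samePiece_equivalence
    (fun _ _ _ ↦ eq_of_adj_of_not_samePiece hG) (fun _ _ ↦ exists_common_adj_of_samePiece)
    (fun _ _ ↦ adj_or_exists_adj_adj_of_samePiece)]
  exact hS.setOf_samePiece_eq ha

lemma edgesWithin_supp_connectedComponentMk {S : Finset VG} (hS : D.IsPiece S) {a : VG}
    (ha : a ∈ S) :
    (G.deleteEdges G.edgesOffTriangles).edgesWithin
        ((G.deleteEdges G.edgesOffTriangles).connectedComponentMk a).supp = G.edgesWithin S := by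
  rw [edgesWithin_supp_deleteEdges_edgesOffTriangles_connectedComponentMk D.samePiece_equivalence
    (fun _ _ _ ↦ eq_of_adj_of_not_samePiece hG) (fun _ _ ↦ exists_common_adj_of_samePiece)
    (fun _ _ ↦ adj_or_exists_adj_adj_of_samePiece), hS.setOf_samePiece_eq ha]

variable (D)

lemma supp_triComponent (u : VH) : (D.triComponent u).supp = D.tri u :=
  supp_connectedComponentMk hG (Or.inl ⟨u, rfl⟩) (D.tri_nonempty u).choose_spec

lemma triComponent_injective : Function.Injective D.triComponent := by
  intro u u' h
  by_contra hne
  have htri := D.supp_triComponent hG u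
  rw [h, D.supp_triComponent hG u', Finset.coe_inj] at htri
  have hdisj := D.tri_disj u u' hne
  rw [htri, disjoint_self, bot_eq_empty] at hdisj
  exact (D.tri_nonempty u).ne_empty hdisj

lemma ncard_supp_triComponent (u : VH) : (D.triComponent u).supp.ncard = 3 := by
  rw [D.supp_triComponent hG, Set.ncard_coe_finset, D.tri_card]

lemma ncard_edgesWithin_supp_triComponent (u : VH) :
    ((G.deleteEdges G.edgesOffTriangles).edgesWithin (D.triComponent u).supp).ncard = 3 := by
  rw [triComponent, edgesWithin_supp_connectedComponentMk hG (Or.inl ⟨u, rfl⟩)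
    (D.tri_nonempty u).choose_spec, (D.isNClique_tri u).ncard_edgesWithin]
  rfl

lemma compBetti_triComponent (u : VH) :
    compBetti (G.deleteEdges G.edgesOffTriangles) (D.triComponent u) = 1 := by
  rw [compBetti_eq, D.ncard_supp_triComponent hG, D.ncard_edgesWithin_supp_triComponent hG]
  rfl

lemma mem_range_triComponent_or_ncard_eq
    (c : (G.deleteEdges G.edgesOffTriangles).ConnectedComponent) :
    c ∈ Set.range D.triComponent ∨
      (c.supp.ncard = 4 ∧ ((G.deleteEdges G.edgesOffTriangles).edgesWithin c.supp).ncard = 5) := by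
  induction c using ConnectedComponent.ind with | h a =>
  obtain ⟨S, hS, ha⟩ := D.exists_isPiece_mem a
  rcases hS with ⟨u, rfl⟩ | ⟨e, he, i, hi, rfl⟩
  · refine Or.inl ⟨u, ConnectedComponent.supp_injective ?_⟩
    rw [D.supp_triComponent hG, supp_connectedComponentMk hG (Or.inl ⟨u, rfl⟩) ha]
  · refine Or.inr ⟨?_, ?_⟩
    · rw [supp_connectedComponentMk hG (Or.inr ⟨e, he, i, hi, rfl⟩) ha, Set.ncard_coe_finset,
        D.dia_card e he i hi]
    · rw [edgesWithin_supp_connectedComponentMk hG (Or.inr ⟨e, he, i, hi, rfl⟩) ha]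
      exact D.dia_edges e he i hi

lemma setOf_odd_compBetti_eq_range :
    {c | Odd (compBetti (G.deleteEdges G.edgesOffTriangles) c)} = Set.range D.triComponent := by
  ext c
  refine ⟨fun hc ↦ ?_, fun ⟨u, hu⟩ ↦ ?_⟩
  · refine (D.mem_range_triComponent_or_ncard_eq hG c).resolve_right fun ⟨hV, hE⟩ ↦ ?_
    rw [Set.mem_ofPred_eq, compBetti_eq, hV, hE] at hc
    exact Int.not_odd_iff_even.mpr ⟨1, rfl⟩ hc
  · rw [Set.mem_ofPred_eq, ← hu, D.compBetti_triComponent hG]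
    exact odd_one

include D in
lemma ncard_setOf_odd_compBetti :
    {c | Odd (compBetti (G.deleteEdges G.edgesOffTriangles) c)}.ncard = Fintype.card VH := by
  rw [D.setOf_odd_compBetti_eq_range hG, Set.ncard_range_of_injective (D.triComponent_injective hG),
    Nat.card_eq_fintype_card]

include D in
lemma ncard_supp_edgesWithin_of_odd
    {c : (G.deleteEdges G.edgesOffTriangles).ConnectedComponent}
    (hc : Odd (compBetti (G.deleteEdges G.edgesOffTriangles) c)) :
    c.supp.ncard = 3 ∧ ((G.deleteEdges G.edgesOffTriangles).edgesWithin c.supp).ncard = 3 := by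
  obtain ⟨u, rfl⟩ : c ∈ Set.range D.triComponent := D.setOf_odd_compBetti_eq_range hG ▸ hc
  exact ⟨D.ncard_supp_triComponent hG u, D.ncard_edgesWithin_supp_triComponent hG u⟩

include D in
lemma ncard_supp_edgesWithin_of_not_odd
    {c : (G.deleteEdges G.edgesOffTriangles).ConnectedComponent}
    (hc : ¬ Odd (compBetti (G.deleteEdges G.edgesOffTriangles) c)) :
    c.supp.ncard = 4 ∧ ((G.deleteEdges G.edgesOffTriangles).edgesWithin c.supp).ncard = 5 :=
  (D.mem_range_triComponent_or_ncard_eq hG c).resolve_left fun ⟨u, hu⟩ ↦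
    hc (hu ▸ (D.compBetti_triComponent hG u).symm ▸ odd_one)

end Cubic

end DiamondInflation

theorem stmt14_general {VH VG : Type*} [Fintype VH] [Fintype VG]
    [DecidableEq VH] [DecidableEq VG]
    (H : SimpleGraph VH) (G : SimpleGraph VG)
    [DecidableRel G.Adj]
    (hGcubic : ∀ v, G.degree v = 3)
    (k : Sym2 VH → ℕ) (D : DiamondInflation H G k)
    (X : Set (Sym2 VG))
    (hX : X = {f | f ∈ G.edgeSet ∧ ¬ ∃ x y z : VG,
      G.Adj x y ∧ G.Adj y z ∧ G.Adj x z ∧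
      f ∈ ({s(x, y), s(y, z), s(x, z)} : Set (Sym2 VG))}) :
    {c : (G.deleteEdges X).ConnectedComponent |
        Odd (compBetti (G.deleteEdges X) c)}.ncard = Fintype.card VH ∧
    2 * ({c : (G.deleteEdges X).ConnectedComponent |
        Even (compBetti (G.deleteEdges X) c)}.ncard : ℤ) - 2 * (X.ncard : ℤ)
      = -3 * (Fintype.card VH : ℤ) := by
  replace hX : X = G.edgesOffTriangles := hX
  subst hX
  have hodd := D.ncard_setOf_odd_compBetti hGcubic
  refine ⟨hodd, ?_⟩
  have hcount := two_mul_ncard_add_two_mul_finsum_ncard_edgesWithin_of_degree_eq_three hGcubic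
    (X := G.edgesOffTriangles) fun _ hf ↦ hf.1
  have hedges := finsum_eq_mul_ncard_add_mul_ncard (Odd <| compBetti _ ·)
    (fun c hc ↦ (D.ncard_supp_edgesWithin_of_odd hGcubic hc).2)
    (fun c hc ↦ (D.ncard_supp_edgesWithin_of_not_odd hGcubic hc).2)
  have hvertices := finsum_eq_mul_ncard_add_mul_ncard (Odd <| compBetti _ ·)
    (fun c hc ↦ (D.ncard_supp_edgesWithin_of_odd hGcubic hc).1)
    (fun c hc ↦ (D.ncard_supp_edgesWithin_of_not_odd hGcubic hc).1)
  simp only [Int.not_odd_iff_even] at hedges hvertices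
  rw [hedges, hvertices, hodd] at hcount
  omega

/-- For a connected cubic graph `G` obtained from a 2-edge-connected cubic graph `H` on
`n` vertices by inflating every vertex to a triangle and replacing each edge by a string
of diamonds, with `X` the set of edges of `G` lying on no triangle: the number of
cyclically odd components of `G − X` equals `n`, and `ec(G − X) − |X| = −3n/2`
(written as `2·ec(G − X) − 2|X| = −3n`). -/
theorem stmt14 {VH VG : Type*} [Fintype VH] [Fintype VG]
    [DecidableEq VH] [DecidableEq VG]
    (H : SimpleGraph VH) (G : SimpleGraph VG)
    [DecidableRel H.Adj] [DecidableRel G.Adj]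
    (hHconn : H.Connected) (hHcubic : ∀ v, H.degree v = 3)
    (hH2ec : ∀ f ∈ H.edgeFinset, (H.deleteEdges {f}).Connected)
    (hGconn : G.Connected) (hGcubic : ∀ v, G.degree v = 3)
    (k : Sym2 VH → ℕ) (D : DiamondInflation H G k)
    (X : Set (Sym2 VG))
    (hX : X = {f | f ∈ G.edgeSet ∧ ¬ ∃ x y z : VG,
      G.Adj x y ∧ G.Adj y z ∧ G.Adj x z ∧
      f ∈ ({s(x, y), s(y, z), s(x, z)} : Set (Sym2 VG))}) :
    {c : (G.deleteEdges X).ConnectedComponent |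
        Odd (compBetti (G.deleteEdges X) c)}.ncard = Fintype.card VH ∧
    2 * ({c : (G.deleteEdges X).ConnectedComponent |
        Even (compBetti (G.deleteEdges X) c)}.ncard : ℤ) - 2 * (X.ncard : ℤ)
      = -3 * (Fintype.card VH : ℤ) :=
  stmt14_general H G hGcubic k D X hX
end
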